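/- arXiv:math/0309110 — 11 statements merged into one kernel-verified Lean document; each statement's English description precedes it below -/
import Mathlib

section
/- Let A be a k×k strictly upper triangular integer matrix and let P_A be the set of integer sequences λ = (λ_1,...,λ_k) satisfying λ_i ≥ Σ_{j>i} A[i,j]·λ_j for all 1 ≤ i ≤ k. Then every element of P_A has all entries nonnegative if and only if every entry of B = (I-A)^{-1} is nonnegative. -/
/-!
Since `A` is strictly upper triangular, `A ^ k = 0`, so `B = ∑_{m < k} A ^ m` is a two-sided
inverse of `I - A`, and `λ ≥ Aλ` says exactly `(I - A) λ ≥ 0`. For mutually inverse `M`, `B`,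
"`M v ≥ 0` forces `v ≥ 0`" is equivalent to `B ≥ 0`: one direction writes `v = B (M v)`, the
other applies the hypothesis to the columns of `B`, whose images under `M` are unit vectors.
-/

open Finset Polynomial

namespace Matrix

variable {n R : Type*} [Fintype n] [DecidableEq n]

theorem pow_card_eq_zero_of_strictly_upper [CommRing R] [LinearOrder n] {A : Matrix n n R}
    (hA : ∀ i j, j ≤ i → A i j = 0) : A ^ Fintype.card n = 0 := by
  have hUpper : A.IsUpperTriangular := fun i j hji => hA i j hji.le
  have hCharpoly : A.charpoly = X ^ Fintype.card n := by
    simp [charpoly_of_isUpperTriangular A hUpper, hA _ _ le_rfl]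
  simpa [hCharpoly] using aeval_self_charpoly A

theorem nonneg_of_mulVec_nonneg_iff [Semiring R] [PartialOrder R] [IsOrderedRing R]
    {M B : Matrix n n R} (hMB : M * B = 1) (hBM : B * M = 1) :
    (∀ v : n → R, 0 ≤ M *ᵥ v → 0 ≤ v) ↔ ∀ i j, 0 ≤ B i j := by
  constructor
  · intro h i j
    have hUnit : M *ᵥ (B *ᵥ Pi.single j 1) = Pi.single j 1 := by
      rw [mulVec_mulVec, hMB, one_mulVec]
    have hCol := h _ (hUnit ▸ Pi.single_nonneg.mpr zero_le_one) i
    simpa [mulVec_single_one] using hCol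
  · intro hB v hMv
    rw [← one_mulVec v, ← hBM, ← mulVec_mulVec]
    exact fun i => sum_nonneg fun l _ => mul_nonneg (hB i l) (hMv l)

end Matrix

/-- every solution of `λ ≥ Aλ` (componentwise) is nonnegative iff every entry
of `B = (I - A)⁻¹ = I + A + ⋯ + A^(k-1)` is nonnegative. -/
theorem stmt_1 (k : ℕ) (A : Matrix (Fin k) (Fin k) ℤ)
    (hA : ∀ i j : Fin k, j ≤ i → A i j = 0) :
    (∀ lam : Fin k → ℤ, (∀ i, ∑ j, A i j * lam j ≤ lam i) → ∀ i, 0 ≤ lam i) ↔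
    (∀ i j : Fin k, 0 ≤ (∑ m ∈ Finset.range k, A ^ m) i j) := by
  have hNilpotent : A ^ k = 0 := by
    simpa using Matrix.pow_card_eq_zero_of_strictly_upper hA
  have hRight : (1 - A) * ∑ m ∈ range k, A ^ m = 1 := by
    rw [mul_neg_geom_sum, hNilpotent, sub_zero]
  have hLeft : (∑ m ∈ range k, A ^ m) * (1 - A) = 1 := by
    rw [geom_sum_mul_neg, hNilpotent, sub_zero]
  rw [← Matrix.nonneg_of_mulVec_nonneg_iff hRight hLeft]
  simp only [Matrix.sub_mulVec, Matrix.one_mulVec, Pi.le_def, Pi.zero_apply, sub_nonneg]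
  rfl
end

section
/- Let A be a k×k strictly upper triangular integer matrix such that B = (I-A)^{-1} has all nonnegative entries. Let b_i = Σ_j B[j,i] (the i-th column sum of B). Then for every n ≥ 0, the number of λ ∈ P_A with λ_1 + ... + λ_k = n equals the number of k-tuples (s_1,...,s_k) of nonnegative integers with b_1·s_1 + ... + b_k·s_k = n. Equivalently, the weight generating function of P_A is Π_{i=1}^k (1-q^{b_i})^{-1}. -/
/-!
A strictly upper triangular `A` is nilpotent, so `I - A` is invertible over `ℤ` with inverse
`B = ∑_{m<k} A^m`. The defining inequalities of `P_A` say exactly that `s = (I - A) λ` is a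
vector of natural numbers, so `λ ↦ (I - A) λ` is a bijection from `P_A` onto `ℕ^k`, with inverse
`s ↦ B s`. Under it the weight `∑ λᵢ = ∑ (B s)ᵢ` becomes `∑ bᵢ sᵢ`.
-/

open Finset

namespace Matrix

variable {R ι : Type*}

theorem pow_apply_eq_zero_of_lt_add [Semiring R] {k : ℕ} {A : Matrix (Fin k) (Fin k) R}
    (hA : ∀ i j, j ≤ i → A i j = 0) (m : ℕ) {i j : Fin k} (hij : (j : ℕ) < i + m) :
    (A ^ m) i j = 0 := by
  induction m generalizing j with
  | zero => exact one_apply_ne (by rintro rfl; omega)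
  | succ m ih =>
    rw [pow_succ, mul_apply]
    refine sum_eq_zero fun l _ => ?_
    rcases lt_or_ge (l : ℕ) (i + m) with hl | hl
    · rw [ih hl, zero_mul]
    · rw [hA l j (Fin.le_def.mpr (by omega)), mul_zero]

theorem pow_eq_zero_of_strictUpperTriangular [Semiring R] {k : ℕ}
    {A : Matrix (Fin k) (Fin k) R} (hA : ∀ i j, j ≤ i → A i j = 0) : A ^ k = 0 := by
  ext i j
  exact pow_apply_eq_zero_of_lt_add hA k (by omega)

theorem sum_mulVec_apply [Fintype ι] [NonUnitalNonAssocSemiring R] (B : Matrix ι ι R)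
    (v : ι → R) : ∑ i, (B *ᵥ v) i = ∑ i, (∑ j, B j i) * v i := by
  simp only [mulVec, dotProduct, sum_mul]
  exact sum_comm

variable [Fintype ι] [DecidableEq ι]

theorem one_sub_mulVec_nonneg_iff [Ring R] [PartialOrder R] [IsOrderedAddMonoid R]
    (A : Matrix ι ι R) (v : ι → R) : 0 ≤ (1 - A) *ᵥ v ↔ A *ᵥ v ≤ v := by
  rw [sub_mulVec, one_mulVec, sub_nonneg]

theorem ncard_mulVec_le_self_eq {A B : Matrix ι ι ℤ} (hBA : B * (1 - A) = 1)
    (hAB : (1 - A) * B = 1) (n : ℤ) :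
    {lam : ι → ℤ | A *ᵥ lam ≤ lam ∧ ∑ i, lam i = n}.ncard =
      {s : ι → ℕ | ∑ i, (∑ j, B j i) * (s i : ℤ) = n}.ncard := by
  have hBA' (v : ι → ℤ) : B *ᵥ ((1 - A) *ᵥ v) = v := by rw [mulVec_mulVec, hBA, one_mulVec]
  have hAB' (v : ι → ℤ) : (1 - A) *ᵥ (B *ᵥ v) = v := by rw [mulVec_mulVec, hAB, one_mulVec]
  refine (Set.BijOn.ncard_eq (f := fun s : ι → ℕ ↦ B *ᵥ ((↑) ∘ s)) ⟨?_, ?_, ?_⟩).symm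
  · intro s hs
    refine ⟨(one_sub_mulVec_nonneg_iff A _).mp ?_, by rwa [sum_mulVec_apply]⟩
    rw [hAB']
    exact fun i ↦ Int.natCast_nonneg (s i)
  · intro s _ t _ hst
    have hcast : ((↑) ∘ s : ι → ℤ) = (↑) ∘ t := by
      rw [← hAB' ((↑) ∘ s), ← hAB' ((↑) ∘ t)]
      exact congrArg ((1 - A) *ᵥ ·) hst
    exact Nat.cast_injective.comp_left hcast
  · rintro lam ⟨hle, hsum⟩
    have hnonneg := (one_sub_mulVec_nonneg_iff A lam).mpr hle
    set s : ι → ℕ := fun i ↦ (((1 - A) *ᵥ lam) i).toNat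
    have hs : B *ᵥ ((↑) ∘ s) = lam := by
      rw [← hBA' lam]
      exact congrArg (B *ᵥ ·) (funext fun i ↦ Int.toNat_of_nonneg (hnonneg i))
    refine ⟨s, ?_, hs⟩
    change ∑ i, (∑ j, B j i) * ((↑) ∘ s) i = n
    rw [← sum_mulVec_apply, hs, hsum]

end Matrix

theorem stmt_3_general (k n : ℕ) (A : Matrix (Fin k) (Fin k) ℤ)
    (hA : ∀ i j : Fin k, j ≤ i → A i j = 0) :
    {lam : Fin k → ℤ | (∀ i, ∑ j, A i j * lam j ≤ lam i) ∧ ∑ i, lam i = (n : ℤ)}.ncard =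
    {s : Fin k → ℕ |
      ∑ i, (∑ j, (∑ m ∈ Finset.range k, A ^ m) j i) * (s i : ℤ) = (n : ℤ)}.ncard := by
  have hAk := Matrix.pow_eq_zero_of_strictUpperTriangular hA
  exact Matrix.ncard_mulVec_le_self_eq (by simpa [hAk] using geom_sum_mul_neg A k)
    (by simpa [hAk] using mul_neg_geom_sum A k) n

/-- if `B = (I-A)⁻¹` is nonnegative, the number of `λ ∈ P_A` of weight `n`
equals the number of tuples `s ∈ ℕ^k` with `∑ bᵢ sᵢ = n`, where `bᵢ` is the `i`-th column
sum of `B`.  (Equivalently the weight generating function of `P_A` is `∏ (1-q^{bᵢ})⁻¹`.) -/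
theorem stmt_3 (k n : ℕ) (A : Matrix (Fin k) (Fin k) ℤ)
    (hA : ∀ i j : Fin k, j ≤ i → A i j = 0)
    (hB : ∀ i j : Fin k, 0 ≤ (∑ m ∈ Finset.range k, A ^ m) i j) :
    {lam : Fin k → ℤ | (∀ i, ∑ j, A i j * lam j ≤ lam i) ∧ ∑ i, lam i = (n : ℤ)}.ncard =
    {s : Fin k → ℕ |
      ∑ i, (∑ j, (∑ m ∈ Finset.range k, A ^ m) j i) * (s i : ℤ) = (n : ℤ)}.ncard :=
  stmt_3_general k n A hA
end

section
/- There is a bijection between the set of integer sequences (λ_1,...,λ_k) of weight n satisfying Σ_{j=0}^{k-1}(-1)^j λ_{1+j} = 0 and Σ_{j=0}^{k-i}(-1)^j λ_{i+j} ≥ 0 for 2 ≤ i ≤ k, and the set of compositions of n into k-1 nonnegative even parts. -/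
/-!
Let `S i = ∑_{j ≥ i} (-1)^(j-i) λ_j` be the alternating tail sums. Then `λ_i = S_i + S_{i+1}`
with `S_k = 0`, so `λ` and `S` determine each other, and the weight of `λ` telescopes to
`S_0 + 2 ∑_{0<i<k} S_i`. The conditions say exactly that `S_0 = 0` and all `S_i ≥ 0`, so
`μ_i = 2 S_{i+1}` is the bijection.
-/

open Finset

section AltTailSum

variable {k : ℕ} (lam : Fin k → ℤ)

def altTailSum (i : ℕ) : ℤ :=
  ∑ j : Fin k with i ≤ j.val, (-1 : ℤ) ^ (j.val - i) * lam j

theorem altTailSum_eq_zero_of_le {i : ℕ} (h : k ≤ i) : altTailSum lam i = 0 :=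
  sum_eq_zero fun j hj => absurd (mem_filter.1 hj).2 (by omega)

theorem altTailSum_add_altTailSum_succ {i : ℕ} (h : i < k) :
    altTailSum lam i + altTailSum lam (i + 1) = lam ⟨i, h⟩ := by
  have hsplit : (univ.filter fun j : Fin k => i ≤ j.val) =
      insert ⟨i, h⟩ (univ.filter fun j : Fin k => i + 1 ≤ j.val) := by
    ext j
    simp only [mem_filter, mem_univ, true_and, mem_insert, Fin.ext_iff]
    omega
  rw [altTailSum, hsplit, sum_insert (by simp), altTailSum, add_assoc, ← sum_add_distrib]
  have hcancel : ∀ j ∈ (univ.filter fun j : Fin k => i + 1 ≤ j.val),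
      (-1 : ℤ) ^ ((j : ℕ) - i) * lam j + (-1) ^ ((j : ℕ) - (i + 1)) * lam j = 0 := by
    intro j hj
    rw [show (j : ℕ) - i = (j : ℕ) - (i + 1) + 1 by grind, pow_succ]
    ring
  rw [sum_eq_zero hcancel, Nat.sub_self, pow_zero, one_mul, add_zero]

theorem eq_altTailSum_of_add_succ {T : ℕ → ℤ} (hT : ∀ i, k ≤ i → T i = 0)
    (hrec : ∀ i (h : i < k), T i + T (i + 1) = lam ⟨i, h⟩) (i : ℕ) :
    T i = altTailSum lam i := by
  induction hd : k - i generalizing i with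
  | zero => rw [hT i (by omega), altTailSum_eq_zero_of_le lam (by omega)]
  | succ d ih =>
    have hi : i < k := by omega
    linarith [hrec i hi, altTailSum_add_altTailSum_succ lam hi, ih (i + 1) (by omega)]

theorem sum_eq_altTailSum_zero_add_two_mul :
    ∑ i, lam i = altTailSum lam 0 + 2 * ∑ j : Fin (k - 1), altTailSum lam (j + 1) := by
  cases k with
  | zero => simp [altTailSum_eq_zero_of_le]
  | succ m =>
    have hsum : ∑ i, lam i =
        ∑ i ∈ range (m + 1), (altTailSum lam i + altTailSum lam (i + 1)) := by
      rw [← Fin.sum_univ_eq_sum_range]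
      exact sum_congr rfl fun i _ => (altTailSum_add_altTailSum_succ lam i.isLt).symm
    rw [hsum, sum_add_distrib, sum_range_succ', sum_range_succ,
      altTailSum_eq_zero_of_le lam le_rfl, Nat.add_sub_cancel, Fin.sum_univ_eq_sum_range
        (fun j => altTailSum lam (j + 1))]
    ring

end AltTailSum

/-- Indices are `0`-based: `altTailSum lam i` is the paper's alternating sum starting at
`λ_{i+1}`, so its conditions for `2 ≤ i ≤ k` become `0 < i`. -/
def alternatingSeqs (k n : ℕ) : Set (Fin k → ℤ) :=
  {lam | altTailSum lam 0 = 0 ∧ (∀ i, 0 < i → 0 ≤ altTailSum lam i) ∧ ∑ i, lam i = n}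

def evenCompositions (m n : ℕ) : Set (Fin m → ℕ) :=
  {mu | (∀ i, Even (mu i)) ∧ ∑ i, mu i = n}

section Bijection

variable {k n : ℕ}

def toEvenComposition (lam : Fin k → ℤ) : Fin (k - 1) → ℕ :=
  fun j => 2 * (altTailSum lam (j + 1)).toNat

def halfPart (k : ℕ) (mu : Fin (k - 1) → ℕ) (i : ℕ) : ℤ :=
  if h : 0 < i ∧ i < k then (mu ⟨i - 1, by omega⟩ / 2 : ℕ) else 0

def ofEvenComposition (k : ℕ) (mu : Fin (k - 1) → ℕ) : Fin k → ℤ :=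
  fun i => halfPart k mu i + halfPart k mu (i + 1)

theorem halfPart_succ (mu : Fin (k - 1) → ℕ) (j : Fin (k - 1)) :
    halfPart k mu (j + 1) = (mu j / 2 : ℕ) := by
  rw [halfPart, dif_pos (by omega)]
  rfl

theorem halfPart_nonneg (mu : Fin (k - 1) → ℕ) (i : ℕ) : 0 ≤ halfPart k mu i := by
  unfold halfPart
  split <;> positivity

theorem altTailSum_ofEvenComposition (mu : Fin (k - 1) → ℕ) (i : ℕ) :
    altTailSum (ofEvenComposition k mu) i = halfPart k mu i :=
  (eq_altTailSum_of_add_succ _ (fun _ hi => dif_neg (by omega)) (fun _ _ => rfl) i).symm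

theorem halfPart_toEvenComposition {lam : Fin k → ℤ} (h : lam ∈ alternatingSeqs k n) (i : ℕ) :
    halfPart k (toEvenComposition lam) i = altTailSum lam i := by
  obtain ⟨h0, hpos, -⟩ := h
  unfold halfPart toEvenComposition
  split_ifs with hi
  · simp only [show i - 1 + 1 = i by omega, Nat.mul_div_cancel_left _ two_pos]
    exact Int.toNat_of_nonneg (hpos i hi.1)
  · rcases Nat.eq_zero_or_pos i with rfl | hi'
    · exact h0.symm
    · exact (altTailSum_eq_zero_of_le lam (by omega)).symm

theorem toEvenComposition_mem {lam : Fin k → ℤ} (h : lam ∈ alternatingSeqs k n) :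
    toEvenComposition lam ∈ evenCompositions (k - 1) n := by
  obtain ⟨h0, hpos, hsum⟩ := h
  refine ⟨fun j => even_two_mul _, ?_⟩
  have hcast : ∑ j, ((toEvenComposition lam j : ℕ) : ℤ) =
      2 * ∑ j : Fin (k - 1), altTailSum lam (j + 1) := by
    rw [mul_sum]
    refine sum_congr rfl fun j _ => ?_
    push_cast [toEvenComposition]
    rw [Int.toNat_of_nonneg (hpos _ (Nat.succ_pos _))]
  rw [← Nat.cast_inj (R := ℤ), Nat.cast_sum, hcast, ← hsum,
    sum_eq_altTailSum_zero_add_two_mul lam, h0, zero_add]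

theorem ofEvenComposition_mem {mu : Fin (k - 1) → ℕ} (h : mu ∈ evenCompositions (k - 1) n) :
    ofEvenComposition k mu ∈ alternatingSeqs k n := by
  obtain ⟨heven, hsum⟩ := h
  have h0 : altTailSum (ofEvenComposition k mu) 0 = 0 := by
    rw [altTailSum_ofEvenComposition, halfPart, dif_neg (by omega)]
  refine ⟨h0, fun i _ => altTailSum_ofEvenComposition mu i ▸ halfPart_nonneg mu i, ?_⟩
  rw [sum_eq_altTailSum_zero_add_two_mul, h0, zero_add, mul_sum, ← hsum, Nat.cast_sum]
  refine sum_congr rfl fun j _ => ?_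
  rw [altTailSum_ofEvenComposition, halfPart_succ]
  exact_mod_cast Nat.two_mul_div_two_of_even (heven j)

def alternatingSeqsEquiv (k n : ℕ) : alternatingSeqs k n ≃ evenCompositions (k - 1) n where
  toFun lam := ⟨toEvenComposition lam, toEvenComposition_mem lam.2⟩
  invFun mu := ⟨ofEvenComposition k mu, ofEvenComposition_mem mu.2⟩
  left_inv lam := by
    ext i
    simp only [ofEvenComposition, halfPart_toEvenComposition lam.2]
    exact altTailSum_add_altTailSum_succ _ i.isLt
  right_inv mu := by
    ext j
    simp only [toEvenComposition, altTailSum_ofEvenComposition, halfPart_succ, Int.toNat_natCast]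
    exact Nat.two_mul_div_two_of_even (mu.2.1 j)

end Bijection

/-- integer sequences `(λ₁,…,λ_k)` of weight `n` with vanishing full
alternating sum and nonnegative alternating tail sums are in bijection with compositions
of `n` into `k-1` nonnegative even parts. -/
theorem stmt_5 (k n : ℕ) (hk : 0 < k) :
    Nonempty (
      {lam : Fin k → ℤ |
        (∑ j ∈ Finset.univ.filter (fun j : Fin k => (⟨0, hk⟩ : Fin k) ≤ j),
            (-1 : ℤ) ^ ((j : ℕ)) * lam j) = 0 ∧
        (∀ i : Fin k, 0 < (i : ℕ) →
          0 ≤ ∑ j ∈ Finset.univ.filter (fun j : Fin k => i ≤ j),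
            (-1 : ℤ) ^ ((j : ℕ) - (i : ℕ)) * lam j) ∧
        ∑ i, lam i = (n : ℤ)} ≃
      {mu : Fin (k - 1) → ℕ | (∀ i, Even (mu i)) ∧ ∑ i, mu i = n}) := by
  refine ⟨(Equiv.setCongr ?_).trans (alternatingSeqsEquiv k n)⟩
  ext lam
  have hfin : ∀ i : Fin k, ∑ j with i ≤ j, (-1 : ℤ) ^ ((j : ℕ) - i) * lam j = altTailSum lam i :=
    fun i => by simp only [altTailSum, Fin.le_def]
  have h0 : ∑ j with (⟨0, hk⟩ : Fin k) ≤ j, (-1 : ℤ) ^ (j : ℕ) * lam j = altTailSum lam 0 := by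
    simpa using hfin ⟨0, hk⟩
  have hnat : (∀ i : Fin k, 0 < (i : ℕ) → 0 ≤ altTailSum lam i) ↔
      ∀ i, 0 < i → 0 ≤ altTailSum lam i :=
    ⟨fun h i hi => if hik : i < k then h ⟨i, hik⟩ hi
      else (altTailSum_eq_zero_of_le lam (by omega)).ge, fun h i hi => h i hi⟩
  simp only [Set.mem_ofPred_eq, alternatingSeqs, h0, hfin, hnat]
end

section
/- Fix a positive integer r. The number of partitions (λ_1 ≥ ... ≥ λ_k ≥ 0) of n satisfying λ_i ≥ r·λ_{i+1} for 1 ≤ i ≤ k-1 equals the number of k-tuples (s_1,...,s_k) of nonnegative integers with Σ_{i=1}^k (1 + r + r² + ... + r^{i-1})·s_i = n. Equivalently, the generating function is Π_{i=0}^{k-1} (1 - q^{1+r+...+r^i})^{-1}. -/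
/-!
Put `s_i = λ_i - r λ_{i+1}` (with `λ_{k+1} = 0`). The ratio condition says exactly that this
subtraction never truncates, and then `λ_i = ∑_{j ≥ i} r^{j-i} s_j`; conversely this formula turns
any `s ∈ ℕ^k` into a sequence satisfying the ratio condition, nonincreasing because `r ≥ 1`.
Summing over `i`, the part `s_j` is counted with weight `1 + r + ⋯ + r^{j-1}`.
-/

open Finset

theorem Finset.sum_range_sum_Ico_pow_mul {R : Type*} [CommSemiring R] (r : R) (f : ℕ → R)
    (k : ℕ) :
    ∑ i ∈ range k, ∑ j ∈ Ico i k, r ^ (j - i) * f j =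
      ∑ j ∈ range k, (∑ t ∈ range (j + 1), r ^ t) * f j := by
  rw [sum_comm' (t' := range k) (s' := fun j => range (j + 1))
    (by intro i j; simp only [mem_range, mem_Ico]; omega)]
  refine sum_congr rfl fun j _ => ?_
  rw [sum_mul, ← sum_range_reflect]
  refine sum_congr rfl fun i hi => ?_
  rw [mem_range] at hi
  congr 2
  omega

namespace RatioPartition

variable {k : ℕ}

def extendZero (f : Fin k → ℕ) (m : ℕ) : ℕ :=
  if h : m < k then f ⟨m, h⟩ else 0

@[simp]
lemma extendZero_val (f : Fin k → ℕ) (i : Fin k) : extendZero f i = f i := by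
  simp [extendZero]

lemma extendZero_of_le (f : Fin k → ℕ) {m : ℕ} (h : k ≤ m) : extendZero f m = 0 := by
  simp [extendZero, h.not_gt]

lemma ratio_condition_iff (r : ℕ) (lam : Fin k → ℕ) :
    (∀ i : Fin k, ∀ h : (i : ℕ) + 1 < k, r * lam ⟨(i : ℕ) + 1, h⟩ ≤ lam i) ↔
      ∀ m, r * extendZero lam (m + 1) ≤ extendZero lam m := by
  constructor
  · intro h m
    by_cases hm : m + 1 < k
    · simpa [extendZero, hm, Nat.lt_of_succ_lt hm] using h ⟨m, by omega⟩ hm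
    · simp [extendZero_of_le lam (not_lt.1 hm)]
  · intro h i hi
    simpa [extendZero, hi] using h i

def weightedTail (r : ℕ) (s : Fin k → ℕ) (m : ℕ) : ℕ :=
  ∑ j ∈ Ico m k, r ^ (j - m) * extendZero s j

lemma weightedTail_of_le (r : ℕ) (s : Fin k → ℕ) {m : ℕ} (h : k ≤ m) :
    weightedTail r s m = 0 := by
  simp [weightedTail, Ico_eq_empty_of_le h]

lemma weightedTail_eq (r : ℕ) (s : Fin k → ℕ) (m : ℕ) :
    weightedTail r s m = extendZero s m + r * weightedTail r s (m + 1) := by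
  rcases lt_or_ge m k with hm | hm
  · rw [weightedTail, sum_eq_sum_Ico_succ_bot hm, Nat.sub_self, pow_zero, one_mul,
      weightedTail, mul_sum]
    refine congrArg _ (sum_congr rfl fun j hj => ?_)
    rw [mem_Ico] at hj
    rw [← mul_assoc, ← pow_succ', show j - m = j - (m + 1) + 1 by omega]
  · rw [weightedTail_of_le r s hm, weightedTail_of_le r s (hm.trans m.le_succ),
      extendZero_of_le s hm, mul_zero, add_zero]

lemma extendZero_weightedTail (r : ℕ) (s : Fin k → ℕ) :
    extendZero (fun i : Fin k => weightedTail r s i) = weightedTail r s := by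
  funext m
  by_cases hm : m < k
  · simp [extendZero, hm]
  · simp [extendZero, hm, weightedTail_of_le r s (not_lt.1 hm)]

lemma weightedTail_antitone {r : ℕ} (hr : 0 < r) (s : Fin k → ℕ) :
    Antitone (weightedTail r s) :=
  antitone_nat_of_succ_le fun m => by
    rw [weightedTail_eq r s m]
    exact (Nat.le_mul_of_pos_left _ hr).trans (Nat.le_add_left _ _)

lemma sum_weightedTail (r : ℕ) (s : Fin k → ℕ) :
    ∑ i : Fin k, weightedTail r s i = ∑ i : Fin k, (∑ t ∈ range (i + 1), r ^ t) * s i := by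
  calc ∑ i : Fin k, weightedTail r s i = ∑ i ∈ range k, weightedTail r s i :=
        Fin.sum_univ_eq_sum_range _ k
    _ = ∑ j ∈ range k, (∑ t ∈ range (j + 1), r ^ t) * extendZero s j :=
        sum_range_sum_Ico_pow_mul _ _ _
    _ = _ := by
        rw [← Fin.sum_univ_eq_sum_range]
        simp only [extendZero_val]

def ratioDefect (r : ℕ) (lam : Fin k → ℕ) (i : Fin k) : ℕ :=
  lam i - r * extendZero lam (i + 1)

lemma extendZero_ratioDefect (r : ℕ) (lam : Fin k → ℕ) (m : ℕ) :
    extendZero (ratioDefect r lam) m = extendZero lam m - r * extendZero lam (m + 1) := by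
  by_cases hm : m < k
  · simp only [extendZero, hm, dite_true, ratioDefect]
  · rw [extendZero_of_le _ (not_lt.1 hm), extendZero_of_le _ (not_lt.1 hm)]
    simp

lemma weightedTail_ratioDefect {r : ℕ} {lam : Fin k → ℕ}
    (h : ∀ m, r * extendZero lam (m + 1) ≤ extendZero lam m) (m : ℕ) :
    weightedTail r (ratioDefect r lam) m = extendZero lam m := by
  induction hd : k - m generalizing m with
  | zero => rw [weightedTail_of_le _ _ (by omega), extendZero_of_le _ (by omega)]
  | succ d ih =>
    rw [weightedTail_eq, ih (m + 1) (by omega), extendZero_ratioDefect, Nat.sub_add_cancel (h m)]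

lemma ratioDefect_weightedTail (r : ℕ) (s : Fin k → ℕ) :
    ratioDefect r (fun i : Fin k => weightedTail r s i) = s := by
  funext i
  rw [ratioDefect, extendZero_weightedTail, weightedTail_eq r s i, extendZero_val,
    Nat.add_sub_cancel]

def ratioPartitions (k r n : ℕ) : Set (Fin k → ℕ) :=
  {lam | Antitone lam ∧
    (∀ i : Fin k, ∀ h : (i : ℕ) + 1 < k, r * lam ⟨(i : ℕ) + 1, h⟩ ≤ lam i) ∧ ∑ i, lam i = n}

def weightedSolutions (k r n : ℕ) : Set (Fin k → ℕ) :=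
  {s | ∑ i : Fin k, (∑ t ∈ range ((i : ℕ) + 1), r ^ t) * s i = n}

theorem bijOn_ratioDefect {r : ℕ} (hr : 0 < r) (n : ℕ) :
    Set.BijOn (ratioDefect r) (ratioPartitions k r n) (weightedSolutions k r n) := by
  have tail_ratioDefect : ∀ lam ∈ ratioPartitions k r n,
      (fun i : Fin k => weightedTail r (ratioDefect r lam) i) = lam := by
    rintro lam ⟨-, hratio, -⟩
    funext i
    rw [weightedTail_ratioDefect ((ratio_condition_iff r lam).1 hratio), extendZero_val]
  refine Set.InvOn.bijOn (f' := fun s i => weightedTail r s i)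
    ⟨tail_ratioDefect, fun s _ => ratioDefect_weightedTail r s⟩ ?_ ?_
  · intro lam hlam
    change _ = n
    rw [← sum_weightedTail, tail_ratioDefect lam hlam]
    exact hlam.2.2
  · intro s hs
    refine ⟨(weightedTail_antitone hr s).comp_monotone Fin.val_strictMono.monotone,
      (ratio_condition_iff r fun i : Fin k => weightedTail r s i).2 fun m => ?_, (sum_weightedTail r s).trans hs⟩
    rw [extendZero_weightedTail, weightedTail_eq r s m]
    exact Nat.le_add_left _ _

end RatioPartition

/-- the number of partitions of `n` into at most `k` parts with
`λᵢ ≥ r·λ_{i+1}` equals the number of `s ∈ ℕ^k` with `∑ᵢ (1 + r + ⋯ + r^{i-1})·sᵢ = n`. -/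
theorem stmt_6 (k n r : ℕ) (hr : 0 < r) :
    {lam : Fin k → ℕ | Antitone lam ∧
      (∀ i : Fin k, ∀ h : (i : ℕ) + 1 < k, r * lam ⟨(i : ℕ) + 1, h⟩ ≤ lam i) ∧
      ∑ i, lam i = n}.ncard =
    {s : Fin k → ℕ | ∑ i : Fin k, (∑ t ∈ Finset.range ((i : ℕ) + 1), r ^ t) * s i = n}.ncard :=
  (RatioPartition.bijOn_ratioDefect hr n).ncard_eq
end

section
/- The number of partitions λ_1 ≥ λ_2 ≥ ... ≥ λ_k ≥ 0 of n satisfying λ_i ≥ λ_{i+1} + λ_{i+2} for all 1 ≤ i ≤ k (with λ_j = 0 for j > k) equals the number of partitions of n into parts from the set {F_2 - 1, F_3 - 1, ..., F_{k+1} - 1}, where F_0 = F_1 = 1 and F_i = F_{i-1} + F_{i-2}. Equivalently, the generating function is Π_{i=2}^{k+1} (1 - q^{F_i - 1})^{-1}. -/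
/-!
Record a partition satisfying `λᵢ ≥ λᵢ₊₁ + λᵢ₊₂` by its slacks `sᵢ = λᵢ - λᵢ₊₁ - λᵢ₊₂`
(`i < k`). The recurrence `λⱼ = sⱼ + λⱼ₊₁ + λⱼ₊₂` with `λⱼ = 0` for `j ≥ k` is solved by
`λⱼ = ∑ᵢ sᵢ F(i - j)` (`F(m) = Nat.fib (m + 1)`, and `0` for `m < 0`), so `λ` is the sum of
the columns `(F(i), F(i-1), …, F(0), 0, …)` with multiplicities `sᵢ`; the column with index `i`
has size `F(0) + ⋯ + F(i) = F(i + 2) - 1`. This identifies the two sets.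
-/

open Finset

namespace Nat

theorem fib_succ_sub_eq (i j : ℕ) :
    fib (i + 1 - j) = (if i = j then 1 else 0) + fib (i + 1 - (j + 1)) + fib (i + 1 - (j + 2)) := by
  rcases lt_trichotomy i j with h | rfl | h
  · rw [if_neg h.ne, Nat.sub_eq_zero_of_le h, Nat.sub_eq_zero_of_le (by omega),
      Nat.sub_eq_zero_of_le (by omega)]
    rfl
  · simp
  · obtain ⟨d, rfl⟩ := Nat.exists_eq_add_of_lt h
    rw [if_neg (by omega), show j + d + 1 + 1 - j = d + 2 by omega,
      show j + d + 1 + 1 - (j + 1) = d + 1 by omega, show j + d + 1 + 1 - (j + 2) = d by omega,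
      fib_add_two]
    ring

theorem sum_range_fib_succ_sub {i k : ℕ} (hik : i < k) :
    ∑ j ∈ range k, fib (i + 1 - j) = fib (i + 3) - 1 := by
  have hvanish : ∀ j ∈ range k, j ∉ range (i + 1) → fib (i + 1 - j) = 0 := fun j _ hj => by
    simp [Nat.sub_eq_zero_of_le (not_lt.mp (mem_range.not.mp hj))]
  calc ∑ j ∈ range k, fib (i + 1 - j)
      = ∑ j ∈ range (i + 1), fib (i + 1 - j) :=
        (sum_subset (range_subset_range.mpr hik) hvanish).symm
    _ = ∑ j ∈ range (i + 1), fib (j + 1) := by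
        rw [← sum_range_reflect]
        refine sum_congr rfl fun j hj => ?_
        rw [mem_range] at hj
        congr 1
        omega
    _ = ∑ m ∈ range (i + 2), fib m := by simp [sum_range_succ' _ (i + 1)]
    _ = fib (i + 3) - 1 := by rw [fib_succ_eq_succ_sum (i + 2)]; rfl

end Nat

theorem eq_of_forall_eq_add_add {M : Type*} [Add M] {k : ℕ} {c f g : ℕ → M}
    (h₀ : ∀ j, k ≤ j → f j = g j) (hf : ∀ j < k, f j = c j + f (j + 1) + f (j + 2))
    (hg : ∀ j < k, g j = c j + g (j + 1) + g (j + 2)) : f = g := by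
  suffices ∀ d j, k ≤ j + d → f j = g j from funext fun j => this k j (by omega)
  intro d
  induction d with
  | zero => exact fun j hj => h₀ j hj
  | succ d ih =>
    intro j hj
    by_cases hjk : j < k
    · rw [hf j hjk, hg j hjk, ih (j + 1) (by omega), ih (j + 2) (by omega)]
    · exact h₀ j (by omega)

def fibPartition (k : ℕ) (s : Fin k → ℕ) (j : ℕ) : ℕ :=
  ∑ i : Fin k, s i * Nat.fib (i + 1 - j)

section fibPartition

variable {k : ℕ} (s : Fin k → ℕ)

theorem fibPartition_eq_zero {j : ℕ} (hj : k ≤ j) : fibPartition k s j = 0 :=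
  sum_eq_zero fun i _ => by simp [Nat.sub_eq_zero_of_le (show (i : ℕ) + 1 ≤ j by omega)]

theorem fibPartition_eq_add_add {j : ℕ} (hj : j < k) :
    fibPartition k s j = s ⟨j, hj⟩ + fibPartition k s (j + 1) + fibPartition k s (j + 2) := by
  have hval : ∀ i : Fin k, (i : ℕ) = j ↔ i = ⟨j, hj⟩ := fun i => by rw [Fin.ext_iff]
  simp only [fibPartition, Nat.fib_succ_sub_eq _ j, mul_add, sum_add_distrib, mul_ite, mul_one,
    mul_zero, hval, sum_ite_eq', mem_univ, if_true]

theorem fibPartition_antitone : Antitone (fibPartition k s) :=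
  antitone_nat_of_succ_le fun _ =>
    sum_le_sum fun _ _ => Nat.mul_le_mul_left _ (Nat.fib_mono (by omega))

theorem sum_range_fibPartition :
    ∑ j ∈ range k, fibPartition k s j = ∑ i : Fin k, (Nat.fib ((i : ℕ) + 3) - 1) * s i := by
  simp only [fibPartition, sum_comm (s := range k), ← mul_sum,
    Nat.sum_range_fib_succ_sub (Fin.is_lt _), mul_comm]

end fibPartition

theorem fibPartition_injective (k : ℕ) : Function.Injective (fibPartition k) := by
  intro s s' h
  funext ⟨j, hj⟩
  have := fibPartition_eq_add_add s hj
  rw [h, fibPartition_eq_add_add s' hj] at this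
  omega

theorem exists_fibPartition_eq {k : ℕ} {lam : ℕ → ℕ} (hzero : ∀ j, k ≤ j → lam j = 0)
    (hcond : ∀ i < k, lam (i + 1) + lam (i + 2) ≤ lam i) :
    ∃ s, fibPartition k s = lam := by
  refine ⟨fun i => lam i - lam (i + 1) - lam (i + 2),
    eq_of_forall_eq_add_add (c := fun j => lam j - lam (j + 1) - lam (j + 2)) ?_
      (fun j hj => fibPartition_eq_add_add _ hj) fun j hj => ?_⟩
  · exact fun j hj => (fibPartition_eq_zero _ hj).trans (hzero j hj).symm
  · have := hcond j hj
    omega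

/-- partitions of `n` into at most `k` parts with `λᵢ ≥ λ_{i+1} + λ_{i+2}`
are equinumerous with partitions of `n` into parts `F_i - 1`, `i = 2,…,k+1`, where
`F₀ = F₁ = 1` are the Fibonacci numbers (so `F_i = Nat.fib (i+1)`). -/
theorem stmt_7 (k n : ℕ) :
    {lam : ℕ → ℕ | Antitone lam ∧ (∀ j, k ≤ j → lam j = 0) ∧
      (∀ i < k, lam (i + 1) + lam (i + 2) ≤ lam i) ∧
      ∑ j ∈ Finset.range k, lam j = n}.ncard =
    {s : Fin k → ℕ | ∑ i : Fin k, (Nat.fib ((i : ℕ) + 3) - 1) * s i = n}.ncard := by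
  have himage : {lam : ℕ → ℕ | Antitone lam ∧ (∀ j, k ≤ j → lam j = 0) ∧
      (∀ i < k, lam (i + 1) + lam (i + 2) ≤ lam i) ∧ ∑ j ∈ Finset.range k, lam j = n} =
      fibPartition k '' {s | ∑ i : Fin k, (Nat.fib ((i : ℕ) + 3) - 1) * s i = n} := by
    ext lam
    constructor
    · rintro ⟨-, hzero, hcond, hsum⟩
      obtain ⟨s, rfl⟩ := exists_fibPartition_eq hzero hcond
      exact ⟨s, (sum_range_fibPartition s).symm.trans hsum, rfl⟩
    · rintro ⟨s, hs, rfl⟩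
      refine ⟨fibPartition_antitone s, fun j => fibPartition_eq_zero s, fun i hi => ?_,
        (sum_range_fibPartition s).trans hs⟩
      rw [fibPartition_eq_add_add s hi]
      omega
  rw [himage, Set.ncard_image_of_injective _ (fibPartition_injective k)]
end

section
/- The generating function for partitions λ_1 ≥ ... ≥ λ_k ≥ 0 of n satisfying λ_i ≥ i·(λ_{i+1} + λ_{i+2} + ... + λ_k) for all 1 ≤ i ≤ k is Π_{j=1}^k (1 - q^{j!})^{-1}; i.e., the number of such partitions of n equals the number of k-tuples (s_1,...,s_k) ∈ ℕ^k with Σ_j j!·s_j = n. -/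
/-!
With 0-based tail sums `Tᵢ = λᵢ + ⋯ + λ_{k-1}`, the condition on `λ` reads `Tᵢ ≥ (i + 2)·T_{i+1}`,
and it already forces `λ` to be antitone. Hence `sᵢ := Tᵢ - (i + 2)·T_{i+1}` are arbitrary natural
numbers, `λ` is recovered from `s` through `Tᵢ = sᵢ + (i + 2)·T_{i+1}`, and
`∑ (i + 1)!·sᵢ = ∑ ((i + 1)!·Tᵢ - (i + 2)!·T_{i+1})` telescopes to `T₀ = ∑ λᵢ`.
-/

open Finset Nat

namespace FactorialPartition

variable {k : ℕ}

def tailSum (lam : Fin k → ℕ) (i : ℕ) : ℕ :=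
  ∑ j ∈ univ.filter (fun j : Fin k => i ≤ (j : ℕ)), lam j

lemma tailSum_of_le (lam : Fin k → ℕ) {i : ℕ} (h : k ≤ i) : tailSum lam i = 0 :=
  sum_eq_zero fun j hj => absurd (mem_filter.1 hj).2 (by omega)

lemma tailSum_of_lt (lam : Fin k → ℕ) {i : ℕ} (h : i < k) :
    tailSum lam i = lam ⟨i, h⟩ + tailSum lam (i + 1) := by
  have : univ.filter (fun j : Fin k => i ≤ (j : ℕ)) =
      insert ⟨i, h⟩ (univ.filter fun j : Fin k => i + 1 ≤ (j : ℕ)) := by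
    ext j
    simp only [mem_filter, mem_univ, true_and, mem_insert, Fin.ext_iff]
    omega
  rw [tailSum, this, sum_insert (by simp)]
  rfl

lemma tailSum_zero (lam : Fin k → ℕ) : tailSum lam 0 = ∑ i, lam i := by
  simp [tailSum]

lemma sum_filter_lt_eq_tailSum (lam : Fin k → ℕ) (i : Fin k) :
    ∑ j ∈ univ.filter (fun j : Fin k => i < j), lam j = tailSum lam (i + 1) := by
  simp only [tailSum, Fin.lt_def, Nat.succ_le_iff]

/-- The condition `λᵢ ≥ i·(λ_{i+1} + ⋯ + λ_k)` with 0-based indices. -/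
def Admissible (lam : Fin k → ℕ) : Prop :=
  ∀ i : Fin k, ((i : ℕ) + 1) * tailSum lam (i + 1) ≤ lam i

lemma Admissible.antitone {lam : Fin k → ℕ} (h : Admissible lam) : Antitone lam := by
  intro i j hij
  obtain rfl | hlt := hij.eq_or_lt
  · rfl
  calc lam j ≤ tailSum lam (i + 1) := single_le_sum (fun _ _ => Nat.zero_le _) (by simpa)
    _ ≤ ((i : ℕ) + 1) * tailSum lam (i + 1) := Nat.le_mul_of_pos_left _ (by omega)
    _ ≤ lam i := h i

lemma Admissible.mul_tailSum_succ_le {lam : Fin k → ℕ} (h : Admissible lam) {i : ℕ}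
    (hi : i < k) : (i + 2) * tailSum lam (i + 1) ≤ tailSum lam i := by
  have := h ⟨i, hi⟩
  rw [tailSum_of_lt lam hi]
  simp only at this
  linarith

/-- The tail sums `Tᵢ` of `ofMultiplicities s`, computed from `s` directly. -/
def weightedTail (s : Fin k → ℕ) (i : ℕ) : ℕ :=
  if h : i < k then s ⟨i, h⟩ + (i + 2) * weightedTail s (i + 1) else 0
termination_by k - i

lemma factorial_mul_weightedTail (s : Fin k → ℕ) (i : ℕ) :
    (i + 1)! * weightedTail s i =
      ∑ j ∈ univ.filter (fun j : Fin k => i ≤ (j : ℕ)), ((j : ℕ) + 1)! * s j := by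
  fun_induction weightedTail s i with
  | case1 i h ih =>
    rw [← tailSum, tailSum_of_lt _ h, tailSum, ← ih, Nat.factorial_succ (i + 1)]
    ring
  | case2 i h => rw [← tailSum, tailSum_of_le _ (not_lt.1 h), mul_zero]

lemma weightedTail_zero (s : Fin k → ℕ) :
    weightedTail s 0 = ∑ i : Fin k, ((i : ℕ) + 1)! * s i := by
  simpa using factorial_mul_weightedTail s 0

def multiplicities (lam : Fin k → ℕ) (i : Fin k) : ℕ :=
  tailSum lam i - ((i : ℕ) + 2) * tailSum lam (i + 1)

def ofMultiplicities (s : Fin k → ℕ) (i : Fin k) : ℕ :=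
  s i + ((i : ℕ) + 1) * weightedTail s (i + 1)

lemma tailSum_ofMultiplicities (s : Fin k → ℕ) (i : ℕ) :
    tailSum (ofMultiplicities s) i = weightedTail s i := by
  fun_induction weightedTail s i with
  | case1 i h ih =>
    rw [tailSum_of_lt _ h, ih, ofMultiplicities]
    ring
  | case2 i h => exact tailSum_of_le _ (not_lt.1 h)

lemma weightedTail_multiplicities {lam : Fin k → ℕ} (h : Admissible lam) (i : ℕ) :
    weightedTail (multiplicities lam) i = tailSum lam i := by
  fun_induction weightedTail (multiplicities lam) i with
  | case1 i hi ih =>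
    rw [ih, multiplicities]
    have := h.mul_tailSum_succ_le hi
    simp only
    omega
  | case2 i hi => exact (tailSum_of_le _ (not_lt.1 hi)).symm

lemma admissible_ofMultiplicities (s : Fin k → ℕ) : Admissible (ofMultiplicities s) := by
  intro i
  rw [tailSum_ofMultiplicities, ofMultiplicities]
  exact Nat.le_add_left _ _

lemma sum_ofMultiplicities (s : Fin k → ℕ) :
    ∑ i, ofMultiplicities s i = ∑ i : Fin k, ((i : ℕ) + 1)! * s i := by
  rw [← tailSum_zero, tailSum_ofMultiplicities, weightedTail_zero]

lemma multiplicities_ofMultiplicities (s : Fin k → ℕ) :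
    multiplicities (ofMultiplicities s) = s := by
  funext i
  rw [multiplicities, tailSum_ofMultiplicities, tailSum_ofMultiplicities,
    weightedTail, dif_pos i.isLt]
  simp

lemma ofMultiplicities_multiplicities {lam : Fin k → ℕ} (h : Admissible lam) :
    ofMultiplicities (multiplicities lam) = lam := by
  funext i
  have := h.mul_tailSum_succ_le i.isLt
  have hi := tailSum_of_lt lam i.isLt
  rw [ofMultiplicities, weightedTail_multiplicities h, multiplicities]
  simp only [Fin.eta] at hi
  rw [hi] at this ⊢
  have : ((i : ℕ) + 2) * tailSum lam (i + 1) =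
      ((i : ℕ) + 1) * tailSum lam (i + 1) + tailSum lam (i + 1) := by ring
  omega

lemma ofMultiplicities_injective : Function.Injective (ofMultiplicities (k := k)) :=
  Function.LeftInverse.injective multiplicities_ofMultiplicities

lemma image_ofMultiplicities (n : ℕ) :
    ofMultiplicities '' {s : Fin k → ℕ | ∑ i : Fin k, ((i : ℕ) + 1)! * s i = n} =
      {lam | Admissible lam ∧ ∑ i, lam i = n} := by
  ext lam
  constructor
  · rintro ⟨s, hs, rfl⟩
    exact ⟨admissible_ofMultiplicities s, (sum_ofMultiplicities s).trans hs⟩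
  · rintro ⟨hlam, hsum⟩
    refine ⟨multiplicities lam, ?_, ofMultiplicities_multiplicities hlam⟩
    rw [Set.mem_ofPred_eq, ← sum_ofMultiplicities, ofMultiplicities_multiplicities hlam, hsum]

end FactorialPartition

open FactorialPartition in
/-- partitions of `n` into at most `k` parts with
`λᵢ ≥ i·(λ_{i+1} + ⋯ + λ_k)` are counted by `∏_{j=1}^k (1 - q^{j!})⁻¹`, i.e. are
equinumerous with tuples `s ∈ ℕ^k` with `∑ⱼ j!·sⱼ = n`. -/
theorem stmt_8 (k n : ℕ) :
    {lam : Fin k → ℕ | Antitone lam ∧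
      (∀ i : Fin k, ((i : ℕ) + 1) *
          (∑ j ∈ Finset.univ.filter (fun j : Fin k => i < j), lam j) ≤ lam i) ∧
      ∑ i, lam i = n}.ncard =
    {s : Fin k → ℕ | ∑ i : Fin k, Nat.factorial ((i : ℕ) + 1) * s i = n}.ncard := by
  have hpartitions : {lam : Fin k → ℕ | Antitone lam ∧
      (∀ i : Fin k, ((i : ℕ) + 1) *
          (∑ j ∈ Finset.univ.filter (fun j : Fin k => i < j), lam j) ≤ lam i) ∧
      ∑ i, lam i = n} = {lam | Admissible lam ∧ ∑ i, lam i = n} := by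
    ext lam
    simp only [Set.mem_ofPred_eq, sum_filter_lt_eq_tailSum]
    exact ⟨fun ⟨_, h⟩ => h, fun h => ⟨h.1.antitone, h⟩⟩
  rw [hpartitions, ← image_ofMultiplicities,
    Set.ncard_image_of_injective _ ofMultiplicities_injective]
end

section
/- The number of partitions λ_1 ≥ λ_2 ≥ ... ≥ λ_k ≥ 0 of n satisfying λ_1 ≥ Σ_{i=2}^k λ_i equals the number of ways to write n = s_1 + Σ_{i=1}^{k-1} 2i·t_i with s_1, t_1,...,t_{k-1} nonnegative integers; i.e., the generating function is (1-q)^{-1} Π_{i=1}^{k-1}(1-q^{2i})^{-1}. -/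
/-!
Let `σ = λ₂ + ⋯ + λ_k`. The tail `(λ₂, …, λ_k)` of a partition is determined by its differences
`t_i = λ_{i+1} - λ_{i+2}` (`1 ≤ i < k`, `λ_{k+1} = 0`), which are arbitrary, and `σ = ∑ i • t_i`;
the head is determined by the surplus `s = λ₁ - σ`. Hence `n = s + 2σ = s + ∑ 2i • t_i`, and
`λ₂ ≤ λ₁` comes for free from `λ₂ ≤ σ ≤ λ₁`.
-/

open Finset

namespace Fin

variable {m : ℕ}

def suffixSum (t : Fin m → ℕ) (j : Fin (m + 1)) : ℕ :=
  ∑ i with j ≤ i.castSucc, t i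

def succDiff (μ : Fin (m + 1) → ℕ) (i : Fin m) : ℕ :=
  μ i.castSucc - μ i.succ

theorem suffixSum_last (t : Fin m → ℕ) : suffixSum t (last m) = 0 := by
  simp [suffixSum]

theorem suffixSum_castSucc (t : Fin m → ℕ) (i : Fin m) :
    suffixSum t i.castSucc = t i + suffixSum t i.succ := by
  simp only [suffixSum, castSucc_le_castSucc_iff, succ_le_castSucc_iff, filter_le_eq_Ici,
    filter_lt_eq_Ioi]
  rw [Ici_eq_cons_Ioi, Finset.sum_cons]

theorem antitone_suffixSum (t : Fin m → ℕ) : Antitone (suffixSum t) := fun _ _ hjk =>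
  sum_le_sum_of_subset (monotone_filter_right _ fun _ _ h => hjk.trans h)

theorem succDiff_suffixSum (t : Fin m → ℕ) : succDiff (suffixSum t) = t := by
  funext i
  rw [succDiff, suffixSum_castSucc, Nat.add_sub_cancel]

theorem suffixSum_succDiff {μ : Fin (m + 1) → ℕ} (hμ : Antitone μ) (hlast : μ (last m) = 0) :
    suffixSum (succDiff μ) = μ := by
  funext j
  induction j using reverseInduction with
  | last => rw [suffixSum_last, hlast]
  | cast i ih =>
    rw [suffixSum_castSucc, ih, succDiff, Nat.sub_add_cancel (hμ i.castSucc_le_succ)]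

theorem sum_suffixSum_castSucc (t : Fin m → ℕ) :
    ∑ j : Fin m, suffixSum t j.castSucc = ∑ i : Fin m, ((i : ℕ) + 1) * t i := by
  simp only [suffixSum, castSucc_le_castSucc_iff]
  rw [Finset.sum_comm' (t' := univ) (s' := fun i => Iic i) (by simp)]
  simp

variable {α : Type*} [Preorder α]

theorem antitone_cons {a : α} {f : Fin m → α} (hf : Antitone f) (ha : ∀ i, f i ≤ a) :
    Antitone (cons a f : Fin (m + 1) → α) := by
  intro x y hxy
  induction y using cases with
  | zero => rw [le_zero_iff.mp hxy]
  | succ y =>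
    induction x using cases with
    | zero => simpa using ha y
    | succ x => simpa using hf (succ_le_succ_iff.mp hxy)

theorem antitone_snoc {b : α} {f : Fin m → α} (hf : Antitone f) (hb : ∀ i, b ≤ f i) :
    Antitone (snoc f b : Fin (m + 1) → α) := by
  intro x y hxy
  induction y using lastCases with
  | last =>
    induction x using lastCases with
    | last => exact le_rfl
    | cast x => simpa using hb x
  | cast y =>
    induction x using lastCases with
    | last => exact absurd hxy (not_le.mpr (castSucc_lt_last y))
    | cast x => simpa using hf (castSucc_le_castSucc_iff.mp hxy)

theorem sum_filter_pos_eq_sum_succ {M : Type*} [AddCommMonoid M] (f : Fin (m + 1) → M) :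
    ∑ j ∈ univ.filter (fun j : Fin (m + 1) => 0 < (j : ℕ)), f j = ∑ i : Fin m, f i.succ := by
  rw [sum_filter, sum_univ_succ]
  simp

end Fin

open Fin

namespace HeadDominantPartition

variable {m : ℕ}

def toPartition (st : ℕ × (Fin m → ℕ)) : Fin (m + 1) → ℕ :=
  cons (st.1 + ∑ i : Fin m, ((i : ℕ) + 1) * st.2 i) (init (suffixSum st.2))

def ofPartition (lam : Fin (m + 1) → ℕ) : ℕ × (Fin m → ℕ) :=
  (lam 0 - ∑ i : Fin m, lam i.succ, succDiff (snoc (tail lam) 0))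

theorem sum_toPartition_succ (st : ℕ × (Fin m → ℕ)) :
    ∑ i : Fin m, toPartition st i.succ = ∑ i : Fin m, ((i : ℕ) + 1) * st.2 i := by
  simp only [toPartition, cons_succ]
  exact sum_suffixSum_castSucc st.2

theorem sum_toPartition_succ_le (st : ℕ × (Fin m → ℕ)) :
    ∑ i : Fin m, toPartition st i.succ ≤ toPartition st 0 := by
  rw [sum_toPartition_succ, toPartition, cons_zero]
  exact Nat.le_add_left _ _

theorem sum_toPartition (st : ℕ × (Fin m → ℕ)) :
    ∑ i, toPartition st i = st.1 + ∑ i : Fin m, 2 * ((i : ℕ) + 1) * st.2 i := by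
  rw [sum_univ_succ, sum_toPartition_succ, toPartition, cons_zero]
  simp only [mul_assoc, ← mul_sum]
  ring

theorem antitone_toPartition (st : ℕ × (Fin m → ℕ)) : Antitone (toPartition st) := by
  refine antitone_cons ((antitone_suffixSum st.2).comp_monotone strictMono_castSucc.monotone)
    fun i => ?_
  rw [← sum_suffixSum_castSucc]
  exact (single_le_sum (fun j _ => Nat.zero_le _) (mem_univ i)).trans (Nat.le_add_left _ _)

theorem ofPartition_toPartition (st : ℕ × (Fin m → ℕ)) : ofPartition (toPartition st) = st := by
  have htail : snoc (tail (toPartition st)) 0 = suffixSum st.2 := by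
    rw [toPartition, tail_cons, ← suffixSum_last st.2, snoc_init_self]
  rw [ofPartition, htail, succDiff_suffixSum, sum_toPartition_succ, toPartition, cons_zero,
    Nat.add_sub_cancel]

theorem toPartition_ofPartition {lam : Fin (m + 1) → ℕ} (hlam : Antitone lam)
    (hle : ∑ i : Fin m, lam i.succ ≤ lam 0) : toPartition (ofPartition lam) = lam := by
  have hsuffix : suffixSum (ofPartition lam).2 = snoc (tail lam) 0 :=
    suffixSum_succDiff
      (antitone_snoc (hlam.comp_monotone strictMono_succ.monotone) fun _ => Nat.zero_le _)
      (snoc_last _ _)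
  have hinit : init (suffixSum (ofPartition lam).2) = tail lam := by rw [hsuffix, init_snoc]
  have hweighted :
      ∑ i : Fin m, ((i : ℕ) + 1) * (ofPartition lam).2 i = ∑ i : Fin m, lam i.succ := by
    rw [← sum_suffixSum_castSucc]
    exact congrArg (fun f => ∑ i, f i) hinit
  rw [toPartition, hweighted, hinit]
  dsimp only [ofPartition]
  rw [Nat.sub_add_cancel hle, cons_self_tail]

theorem image_toPartition (n : ℕ) :
    toPartition '' {st | st.1 + ∑ i : Fin m, 2 * ((i : ℕ) + 1) * st.2 i = n} =
      {lam | Antitone lam ∧ ∑ i : Fin m, lam i.succ ≤ lam 0 ∧ ∑ i, lam i = n} := by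
  ext lam
  constructor
  · rintro ⟨st, rfl, rfl⟩
    exact ⟨antitone_toPartition st, sum_toPartition_succ_le st, sum_toPartition st⟩
  · rintro ⟨hlam, hle, rfl⟩
    refine ⟨ofPartition lam, ?_, toPartition_ofPartition hlam hle⟩
    rw [Set.mem_ofPred_eq, ← sum_toPartition, toPartition_ofPartition hlam hle]

end HeadDominantPartition

open HeadDominantPartition

/-- partitions of `n` into at most `k` parts with `λ₁ ≥ λ₂ + ⋯ + λ_k`
are counted by `(1-q)⁻¹ ∏_{i=1}^{k-1} (1-q^{2i})⁻¹`. -/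
theorem stmt_10 (k n : ℕ) (hk : 0 < k) :
    {lam : Fin k → ℕ | Antitone lam ∧
      (∑ j ∈ Finset.univ.filter (fun j : Fin k => 0 < (j : ℕ)), lam j) ≤ lam ⟨0, hk⟩ ∧
      ∑ i, lam i = n}.ncard =
    {st : ℕ × (Fin (k - 1) → ℕ) |
      st.1 + ∑ i : Fin (k - 1), 2 * ((i : ℕ) + 1) * st.2 i = n}.ncard := by
  obtain ⟨m, rfl⟩ : ∃ m, k = m + 1 := ⟨k - 1, by omega⟩
  simp only [sum_filter_pos_eq_sum_succ, zero_eta]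
  rw [← image_toPartition, Set.ncard_image_of_injective _
    (Function.LeftInverse.injective ofPartition_toPartition)]
  rfl -- `Fin (m + 1 - 1)` is `Fin m` up to reduction of `m + 1 - 1`
end

section
/- Suppose A is a strictly upper triangular integer matrix such that P_A is a set of compositions, with A[i,i+1] = 1 and A[i,j] = 0 for j > i+1 whenever i ≥ 2, and first row given by A[1,j+1] = a_j for 1 ≤ j ≤ k-1. Then the generating function of P_A (sequences with λ_i ≥ λ_{i+1} for 2 ≤ i ≤ k-1, λ_k ≥ 0, and λ_1 ≥ Σ_{i=1}^{k-1} a_i λ_{i+1}) is (1-q)^{-1}·Π_{i=1}^{k-1} (1 - q^{i + a_1 + ... + a_i})^{-1}, provided a_1 + ... + a_i ≥ -(i-1)... i.e. i + a_1 + ... + a_i ≥ 1 for all i. -/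
/-!
Put `μ = (I - A) λ`. The inequalities defining `P_A` say exactly `μ ≥ 0`, and `λ` is recovered
from `μ` by `λᵢ = μᵢ + ⋯ + μ_{k-1}` for `i ≥ 1` and `λ₀ = μ₀ + ∑ aᵢ λᵢ`. So `μ ↦ λ` is a bijection
from `ℕᵏ` onto `P_A`, and summation by parts gives `|λ| = μ₀ + ∑_{i ≥ 1} (i + a₁ + ⋯ + aᵢ) μᵢ`:
the elements of `P_A` of size `n` correspond to the solutions of this equation in `ℕᵏ`, whose
count is the coefficient of `qⁿ` in the product.
-/

open Finset

section TailSum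

variable {M : Type*} [AddCommMonoid M] {k m : ℕ}

def tailSum (s : Fin k → M) (m : ℕ) : M :=
  ∑ j ∈ univ.filter (fun j : Fin k => m ≤ (j : ℕ)), s j

variable (s : Fin k → M)

lemma tailSum_of_le (h : k ≤ m) : tailSum s m = 0 :=
  sum_eq_zero fun j hj => absurd (mem_filter.1 hj).2 (by omega)

lemma tailSum_eq_add_tailSum_succ (hm : m < k) :
    tailSum s m = s ⟨m, hm⟩ + tailSum s (m + 1) := by
  have : univ.filter (fun j : Fin k => m ≤ (j : ℕ)) =
      insert ⟨m, hm⟩ (univ.filter fun j : Fin k => m + 1 ≤ (j : ℕ)) := by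
    ext j
    simp only [mem_filter, mem_univ, true_and, mem_insert, Fin.ext_iff]
    omega
  rw [tailSum, this, sum_insert (by simp)]
  rfl

lemma tailSum_congr {s' : Fin k → M} (h : ∀ j : Fin k, m ≤ (j : ℕ) → s j = s' j) :
    tailSum s m = tailSum s' m :=
  sum_congr rfl fun j hj => h j (mem_filter.1 hj).2

end TailSum

lemma sum_Icc_one_eq_sum_filter_fin {M : Type*} [AddCommMonoid M] {k : ℕ} (c : ℕ → M)
    (j : Fin k) :
    ∑ m ∈ Icc 1 (j : ℕ), c m =
      ∑ i ∈ univ.filter (fun i : Fin k => 0 < (i : ℕ) ∧ i ≤ j), c i := by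
  have : (univ.filter fun i : Fin k => 0 < (i : ℕ) ∧ i ≤ j).map Fin.valEmbedding =
      Icc 1 (j : ℕ) := by
    ext m
    simp only [mem_Icc, mem_map, mem_filter, mem_univ, true_and, Fin.valEmbedding_apply]
    constructor
    · rintro ⟨i, ⟨hi, hij⟩, rfl⟩
      exact ⟨hi, hij⟩
    · intro hm
      exact ⟨⟨m, by omega⟩, ⟨by simp only; omega, Fin.mk_le_mk.2 hm.2⟩, rfl⟩
  rw [← this, sum_map]
  rfl

lemma sum_filter_pos_mul_tailSum {R : Type*} [NonUnitalNonAssocSemiring R] {k : ℕ}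
    (c : ℕ → R) (s : Fin k → R) :
    ∑ i ∈ univ.filter (fun i : Fin k => 0 < (i : ℕ)), c i * tailSum s i =
      ∑ j ∈ univ.filter (fun j : Fin k => 0 < (j : ℕ)), (∑ m ∈ Icc 1 (j : ℕ), c m) * s j := by
  simp only [tailSum, mul_sum, sum_Icc_one_eq_sum_filter_fin, sum_mul]
  refine sum_comm' fun i j => ?_
  simp only [mem_filter, mem_univ, true_and, Fin.le_def]
  omega

lemma Fin.sum_univ_eq_add_sum_filter_pos {M : Type*} [AddCommMonoid M] {k : ℕ} (hk : 0 < k)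
    (f : Fin k → M) :
    ∑ i, f i = f ⟨0, hk⟩ + ∑ i ∈ univ.filter (fun i : Fin k => 0 < (i : ℕ)), f i := by
  rw [← add_sum_erase univ f (mem_univ _)]
  congr 2
  ext i
  simp [Fin.ext_iff, Nat.pos_iff_ne_zero]

section ZeroExtend

variable {G : Type*} {k : ℕ}

def zeroExtend [Zero G] (f : Fin k → G) (m : ℕ) : G :=
  if h : m < k then f ⟨m, h⟩ else 0

lemma zeroExtend_of_lt [Zero G] (f : Fin k → G) {m : ℕ} (h : m < k) : zeroExtend f m = f ⟨m, h⟩ :=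
  dif_pos h

lemma zeroExtend_of_le [Zero G] (f : Fin k → G) {m : ℕ} (h : k ≤ m) : zeroExtend f m = 0 :=
  dif_neg (by omega)

lemma tailSum_sub_zeroExtend_succ [AddCommGroup G] (f : Fin k → G) (m : ℕ) :
    tailSum (fun i => f i - zeroExtend f (i + 1)) m = zeroExtend f m := by
  induction h : k - m generalizing m with
  | zero => rw [tailSum_of_le _ (by omega), zeroExtend_of_le _ (by omega)]
  | succ d ih =>
    rw [tailSum_eq_add_tailSum_succ _ (by omega), ih (m + 1) (by omega),
      sub_add_cancel, zeroExtend_of_lt]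

end ZeroExtend

section Slack

variable {R : Type*} [Ring R] {k : ℕ} (a : ℕ → R)

/-- `slack a λ = (I - A) λ`, where row `0` of `A` is `(0, a 1, …, a (k - 1))` and each row
`i ≥ 1` has its only nonzero entry, a `1`, in column `i + 1`. -/
def slack (lam : Fin k → R) (i : Fin k) : R :=
  if (i : ℕ) = 0 then lam i - ∑ j ∈ univ.filter (fun j : Fin k => 0 < (j : ℕ)), a j * lam j
  else lam i - zeroExtend lam (i + 1)

def ofSlack (s : Fin k → R) (i : Fin k) : R :=
  if (i : ℕ) = 0 then s i + ∑ j ∈ univ.filter (fun j : Fin k => 0 < (j : ℕ)), a j * tailSum s j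
  else tailSum s i

lemma ofSlack_of_pos (s : Fin k → R) {i : Fin k} (hi : 0 < (i : ℕ)) :
    ofSlack a s i = tailSum s i :=
  if_neg hi.ne'

lemma zeroExtend_ofSlack (s : Fin k → R) {m : ℕ} (hm : 1 ≤ m) :
    zeroExtend (ofSlack a s) m = tailSum s m := by
  by_cases h : m < k
  · rw [zeroExtend_of_lt _ h, ofSlack_of_pos a s (by simp only; omega)]
  · rw [zeroExtend_of_le _ (by omega), tailSum_of_le _ (by omega)]

lemma slack_ofSlack (s : Fin k → R) : slack a (ofSlack a s) = s := by
  funext i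
  by_cases hi : (i : ℕ) = 0
  · rw [slack, if_pos hi, ofSlack, if_pos hi]
    convert add_sub_cancel_right (s i) _ using 2
    exact sum_congr rfl fun j hj => by rw [ofSlack_of_pos a s (mem_filter.1 hj).2]
  · rw [slack, if_neg hi, ofSlack_of_pos a s (by omega), zeroExtend_ofSlack a s (by omega),
      tailSum_eq_add_tailSum_succ s i.isLt, add_sub_cancel_right]

lemma tailSum_slack (lam : Fin k → R) {m : ℕ} (hm : 1 ≤ m) :
    tailSum (slack a lam) m = zeroExtend lam m := by
  rw [← tailSum_sub_zeroExtend_succ lam m]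
  exact tailSum_congr _ fun j hj => if_neg (by omega)

lemma ofSlack_slack (lam : Fin k → R) : ofSlack a (slack a lam) = lam := by
  funext i
  by_cases hi : (i : ℕ) = 0
  · rw [ofSlack, if_pos hi, slack, if_pos hi]
    convert sub_add_cancel (lam i) _ using 2
    exact sum_congr rfl fun j hj => by
      rw [tailSum_slack a lam (mem_filter.1 hj).2, zeroExtend_of_lt _ j.isLt]
  · rw [ofSlack_of_pos a _ (by omega), tailSum_slack a lam (by omega), zeroExtend_of_lt _ i.isLt]

lemma sum_ofSlack (hk : 0 < k) (s : Fin k → R) :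
    ∑ i, ofSlack a s i = s ⟨0, hk⟩ + ∑ i ∈ univ.filter (fun i : Fin k => 0 < (i : ℕ)),
      (((i : ℕ) : R) + ∑ j ∈ Icc 1 (i : ℕ), a j) * s i := by
  have hcoeff : ∀ i : ℕ, (i : R) + ∑ j ∈ Icc 1 i, a j = ∑ j ∈ Icc 1 i, (1 + a j) := by
    simp [sum_add_distrib]
  rw [Fin.sum_univ_eq_add_sum_filter_pos hk,
    sum_congr rfl fun i hi => ofSlack_of_pos a s (mem_filter.1 hi).2, ofSlack, if_pos rfl,
    add_assoc, ← sum_add_distrib]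
  simp only [hcoeff, ← sum_filter_pos_mul_tailSum, add_mul, one_mul, add_comm]

lemma slack_nonneg_iff [PartialOrder R] [IsOrderedAddMonoid R] (hk : 0 < k) (lam : Fin k → R) :
    0 ≤ slack a lam ↔
      0 ≤ lam ⟨k - 1, Nat.sub_one_lt_of_lt hk⟩ ∧
      (∀ i : Fin k, 1 ≤ (i : ℕ) → ∀ h : (i : ℕ) + 1 < k, lam ⟨(i : ℕ) + 1, h⟩ ≤ lam i) ∧
      (∑ i ∈ univ.filter (fun i : Fin k => 0 < (i : ℕ)), a (i : ℕ) * lam i) ≤ lam ⟨0, hk⟩ := by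
  have slack_zero (i : Fin k) (hi : (i : ℕ) = 0) : slack a lam i =
      lam i - ∑ j ∈ univ.filter (fun j : Fin k => 0 < (j : ℕ)), a j * lam j := if_pos hi
  have slack_pos (i : Fin k) (hi : 0 < (i : ℕ)) :
      slack a lam i = lam i - zeroExtend lam (i + 1) := if_neg hi.ne'
  constructor
  · intro h
    refine ⟨?_, fun i hi hik => ?_, ?_⟩
    · have hlast : 0 ≤ slack a lam ⟨k - 1, Nat.sub_one_lt_of_lt hk⟩ := h _
      rcases Nat.eq_zero_or_pos (k - 1) with hk1 | hk1
      · have hnone : ∑ j ∈ univ.filter (fun j : Fin k => 0 < (j : ℕ)), a j * lam j = 0 :=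
          sum_eq_zero fun j hj => absurd (mem_filter.1 hj).2 (by have := j.isLt; omega)
        rwa [slack_zero _ hk1, hnone, sub_zero] at hlast
      · rwa [slack_pos _ hk1, zeroExtend_of_le lam (by simp only; omega), sub_zero] at hlast
    · simpa [slack_pos i hi, zeroExtend_of_lt lam hik] using h i
    · simpa [slack_zero ⟨0, hk⟩ rfl] using h ⟨0, hk⟩
  · rintro ⟨hlast, hmono, hfirst⟩ i
    rcases Nat.eq_zero_or_pos i with hi | hi
    · obtain rfl : i = ⟨0, hk⟩ := Fin.ext hi
      simpa [slack_zero ⟨0, hk⟩ rfl] using hfirst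
    · rw [Pi.zero_apply, slack_pos i hi, sub_nonneg]
      by_cases hik : (i : ℕ) + 1 < k
      · rw [zeroExtend_of_lt lam hik]
        exact hmono i hi hik
      · have hi_last : i = ⟨k - 1, Nat.sub_one_lt_of_lt hk⟩ := Fin.ext (by simp only; omega)
        rwa [zeroExtend_of_le lam (by omega), hi_last]

end Slack

/-- with `λᵢ ≥ λ_{i+1}` for `2 ≤ i ≤ k-1`, `λ_k ≥ 0` and
`λ₁ ≥ ∑ aᵢ λ_{i+1}`, provided `i + a₁ + ⋯ + aᵢ ≥ 1` for all `1 ≤ i ≤ k-1`, the generating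
function is `(1-q)⁻¹ ∏_{i=1}^{k-1} (1 - q^{i + a₁ + ⋯ + aᵢ})⁻¹`. -/
theorem stmt_13 (k n : ℕ) (hk : 0 < k) (a : ℕ → ℤ) :
    {lam : Fin k → ℤ |
      0 ≤ lam ⟨k - 1, by omega⟩ ∧
      (∀ i : Fin k, 1 ≤ (i : ℕ) → ∀ h : (i : ℕ) + 1 < k, lam ⟨(i : ℕ) + 1, h⟩ ≤ lam i) ∧
      (∑ i ∈ Finset.univ.filter (fun i : Fin k => 0 < (i : ℕ)), a (i : ℕ) * lam i)
        ≤ lam ⟨0, hk⟩ ∧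
      ∑ i, lam i = (n : ℤ)}.ncard =
    {s : Fin k → ℕ |
      (s ⟨0, hk⟩ : ℤ) +
        ∑ i ∈ Finset.univ.filter (fun i : Fin k => 0 < (i : ℕ)),
          (((i : ℕ) : ℤ) + ∑ j ∈ Finset.Icc 1 (i : ℕ), a j) * (s i : ℤ) = (n : ℤ)}.ncard := by
  symm
  refine Set.ncard_congr (fun s _ => ofSlack a fun i => (s i : ℤ)) ?_ ?_ ?_
  · intro s hs
    have hnonneg : 0 ≤ slack a (ofSlack a fun i => (s i : ℤ)) := by
      rw [slack_ofSlack]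
      exact fun i => Int.natCast_nonneg (s i)
    obtain ⟨hlast, hmono, hfirst⟩ := (slack_nonneg_iff a hk _).1 hnonneg
    exact ⟨hlast, hmono, hfirst, by rw [sum_ofSlack a hk]; exact hs⟩
  · intro s₁ s₂ _ _ h
    have := congrArg (slack a) h
    rw [slack_ofSlack, slack_ofSlack] at this
    exact funext fun i => by exact_mod_cast congrFun this i
  · rintro lam ⟨hlast, hmono, hfirst, hsum⟩
    have hnonneg := (slack_nonneg_iff a hk lam).2 ⟨hlast, hmono, hfirst⟩
    have hslack : (fun i => ((slack a lam i).toNat : ℤ)) = slack a lam :=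
      funext fun i => Int.toNat_of_nonneg (hnonneg i)
    refine ⟨fun i => (slack a lam i).toNat, ?_, by rw [hslack, ofSlack_slack]⟩
    have hweighted := sum_ofSlack a hk (slack a lam)
    rw [ofSlack_slack, hsum] at hweighted
    simpa only [Set.mem_ofPred_eq, Int.toNat_of_nonneg (hnonneg _)] using hweighted.symm
end

section
/- Given positive integers a_1,...,a_k, set b_1 = 1 and b_i = a_1 + ... + a_i for 2 ≤ i ≤ k. The generating function Σ_λ q^{|λ|} over all nonnegative integer sequences (λ_1,...,λ_k) satisfying λ_i · a_{i+1} ≥ a_i · λ_{i+1} for 1 ≤ i ≤ k-1 equals [Σ over (z_2,...,z_k) with 0 ≤ z_i < a_i of q^{⌈a_1 z_2 / a_2⌉ + Σ_{i=2}^k z_i}·Π_{i=2}^{k-1} q^{b_i·⌈z_{i+1}/a_{i+1} - z_i/a_i⌉}] / Π_{i=1}^k (1 - q^{b_i}). -/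
/-!
Write `λᵢ = aᵢ tᵢ + zᵢ` with `0 ≤ zᵢ < aᵢ` for `2 ≤ i ≤ k`. Then `λᵢ / aᵢ ≥ λᵢ₊₁ / aᵢ₊₁` holds
iff `tᵢ - tᵢ₊₁ ≥ ⌈zᵢ₊₁ / aᵢ₊₁ - zᵢ / aᵢ⌉`, and `λ₁ a₂ ≥ a₁ λ₂` iff
`λ₁ ≥ ⌈a₁ λ₂ / a₂⌉ = a₁ t₂ + ⌈a₁ z₂ / a₂⌉`. So the slacks `s₁ = λ₁ - ⌈a₁ λ₂ / a₂⌉`,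
`sᵢ = tᵢ - tᵢ₊₁ - ⌈zᵢ₊₁ / aᵢ₊₁ - zᵢ / aᵢ⌉` and `sₖ = tₖ` are arbitrary natural numbers, and
`λ ↦ (z, s)` is a bijection. Summation by parts rewrites
`∑ λᵢ = s₁ + a₁ t₂ + ⌈a₁ z₂ / a₂⌉ + ∑ (aᵢ tᵢ + zᵢ)` in terms of the differences `tᵢ - tᵢ₊₁`,
whose coefficients are the partial sums `bᵢ = a₁ + ⋯ + aᵢ`.
-/

/-- `b₁ = 1` and `bᵢ = a₁ + ⋯ + aᵢ` for `i ≥ 2`. -/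
def bseq (a : ℕ → ℕ) (i : ℕ) : ℤ :=
  if i = 1 then 1 else ∑ j ∈ Finset.Icc 1 i, (a j : ℤ)

open Finset

namespace RatioSeq

lemma sum_Icc_eq_add_sum_Icc_succ {M : Type*} [AddCommMonoid M] (f : ℕ → M) {i m : ℕ}
    (h : i ≤ m) : ∑ j ∈ Icc i m, f j = f i + ∑ j ∈ Icc (i + 1) m, f j := by
  rw [← insert_Icc_add_one_left_eq_Icc h, sum_insert (by simp)]

lemma mul_add_mul_le_iff_ceil_add_le {a a' q q' r r' : ℕ} (hr : r < a) (ha' : 0 < a') :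
    a * (a' * q' + r') ≤ (a * q + r) * a' ↔
      ⌈(r' : ℚ) / (a' : ℚ) - (r : ℚ) / (a : ℚ)⌉₊ + q' ≤ q := by
  have ha : (0 : ℚ) < a := by exact_mod_cast (Nat.zero_le r).trans_lt hr
  have ha'' : (0 : ℚ) < a' := by exact_mod_cast ha'
  have hx : -1 < (r' : ℚ) / a' - r / a := by
    have : (r : ℚ) / a < 1 := (div_lt_one ha).mpr (by exact_mod_cast hr)
    have : (0 : ℚ) ≤ r' / a' := by positivity
    linarith
  have hceil : ⌈(r' : ℚ) / a' - r / a⌉₊ + q' ≤ q ↔ (⌈(r' : ℚ) / a' - r / a⌉₊ : ℤ) ≤ q - q' := by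
    omega
  rw [hceil, Int.natCast_ceil_eq_ceil_of_neg_one_lt hx, Int.ceil_le, ← Nat.cast_le (α := ℚ)]
  push_cast
  rw [← mul_le_mul_iff_of_pos_right (mul_pos ha ha'')]
  field_simp
  constructor <;> intro h <;> linarith

lemma mul_le_mul_iff_ceil_div_le {a₁ a₂ l₁ l₂ : ℕ} (h : 0 < a₂) :
    a₁ * l₂ ≤ l₁ * a₂ ↔ ⌈((a₁ : ℚ) * (l₂ : ℚ)) / (a₂ : ℚ)⌉₊ ≤ l₁ := by
  rw [Nat.ceil_le, div_le_iff₀ (by exact_mod_cast h)]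
  exact_mod_cast Iff.rfl

lemma ceil_mul_mul_add_div {a₁ a₂ : ℕ} (h : 0 < a₂) (t z : ℕ) :
    ⌈((a₁ : ℚ) * ((a₂ * t + z : ℕ) : ℚ)) / (a₂ : ℚ)⌉₊ =
      a₁ * t + ⌈((a₁ : ℚ) * (z : ℚ)) / (a₂ : ℚ)⌉₊ := by
  have h' : (a₂ : ℚ) ≠ 0 := by exact_mod_cast h.ne'
  rw [show ((a₁ : ℚ) * ((a₂ * t + z : ℕ) : ℚ)) / a₂ = (a₁ * z : ℚ) / a₂ + ((a₁ * t : ℕ) : ℚ) by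
    push_cast; field_simp; ring, Nat.ceil_add_natCast (by positivity)]
  ring

lemma sum_mul_sum_Icc_eq_sum_bseq_mul (a : ℕ → ℕ) (k : ℕ) (x : ℕ → ℤ) :
    (a 1 : ℤ) * ∑ j ∈ Icc 2 k, x j + ∑ i ∈ Icc 2 k, (a i : ℤ) * ∑ j ∈ Icc i k, x j =
      ∑ j ∈ Icc 2 k, bseq a j * x j := by
  simp only [mul_sum]
  rw [sum_comm' (t' := Icc 2 k) (s' := fun j => Icc 2 j) (by simp only [mem_Icc]; omega),
    ← sum_add_distrib]
  refine sum_congr rfl fun j hj => ?_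
  have hj : 2 ≤ j := (mem_Icc.mp hj).1
  rw [bseq, if_neg (by omega), sum_Icc_eq_add_sum_Icc_succ _ (by omega : 1 ≤ j), add_mul, sum_mul]

section Maps

variable (a : ℕ → ℕ) (k : ℕ)

def gap (z : ℕ → ℕ) (i : ℕ) : ℕ :=
  ⌈(z (i + 1) : ℚ) / (a (i + 1) : ℚ) - (z i : ℚ) / (a i : ℚ)⌉₊

def rem (l : ℕ → ℕ) (i : ℕ) : ℕ := if 2 ≤ i ∧ i ≤ k then l i % a i else 0

def slack (l : ℕ → ℕ) (i : ℕ) : ℕ :=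
  if i = 1 then l 1 - ⌈((a 1 : ℚ) * (l 2 : ℚ)) / (a 2 : ℚ)⌉₊
  else if 2 ≤ i ∧ i ≤ k then l i / a i - l (i + 1) / a (i + 1) - gap a (rem a k l) i
  else 0

-- The quotients `tᵢ` of `assemble`, for `2 ≤ i ≤ k + 1`; running the sum up to `k` is harmless
-- since `gap a z k = 0` once `z (k + 1) = 0`.
def level (z s : ℕ → ℕ) (i : ℕ) : ℕ := ∑ j ∈ Icc i k, (s j + gap a z j)

def assemble (z s : ℕ → ℕ) (i : ℕ) : ℕ :=
  if i = 0 then 0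
  else if i = 1 then
    ⌈((a 1 : ℚ) * ((a 2 * level a k z s 2 + z 2 : ℕ) : ℚ)) / (a 2 : ℚ)⌉₊ + s 1
  else a i * level a k z s i + z i

def weight (z s : ℕ → ℕ) : ℤ :=
  ⌈((a 1 : ℚ) * (z 2 : ℚ)) / (a 2 : ℚ)⌉ + (∑ i ∈ Icc 2 k, (z i : ℤ)) +
    (∑ i ∈ Icc 2 (k - 1),
      bseq a i * ⌈(z (i + 1) : ℚ) / (a (i + 1) : ℚ) - (z i : ℚ) / (a i : ℚ)⌉) +
    (∑ i ∈ Icc 1 k, bseq a i * (s i : ℤ))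

end Maps

variable {a : ℕ → ℕ} {k : ℕ}

lemma natCast_gap {z : ℕ → ℕ} {i : ℕ} (h : z i < a i) :
    (gap a z i : ℤ) = ⌈(z (i + 1) : ℚ) / (a (i + 1) : ℚ) - (z i : ℚ) / (a i : ℚ)⌉ := by
  refine Int.natCast_ceil_eq_ceil_of_neg_one_lt ?_
  have : (z i : ℚ) / a i < 1 := (div_lt_one (by exact_mod_cast (Nat.zero_le _).trans_lt h)).mpr
    (by exact_mod_cast h)
  have : (0 : ℚ) ≤ z (i + 1) / a (i + 1) := by positivity
  linarith

lemma gap_eq_zero {z : ℕ → ℕ} {i : ℕ} (h : z (i + 1) = 0) : gap a z i = 0 := by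
  rw [gap, h, Nat.ceil_eq_zero]
  simp only [Nat.cast_zero, zero_div, zero_sub, neg_nonpos]
  positivity

section Assemble

variable {z s : ℕ → ℕ} (ha : ∀ i, 1 ≤ i → i ≤ k → 0 < a i)
  (hz : ∀ i, 2 ≤ i ∧ i ≤ k → z i < a i) (hz0 : ∀ i, ¬(2 ≤ i ∧ i ≤ k) → z i = 0)

lemma level_eq_add {i : ℕ} (h : i ≤ k) :
    level a k z s i = s i + gap a z i + level a k z s (i + 1) := by
  rw [level, level, sum_Icc_eq_add_sum_Icc_succ _ h]

lemma level_eq_zero {i : ℕ} (h : k < i) : level a k z s i = 0 := by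
  rw [level, Icc_eq_empty (by omega), sum_empty]

lemma assemble_of_two_le {i : ℕ} (h : 2 ≤ i) :
    assemble a k z s i = a i * level a k z s i + z i := by
  rw [assemble, if_neg (by omega), if_neg (by omega)]

lemma assemble_one_eq_ceil :
    assemble a k z s 1 = ⌈((a 1 : ℚ) * (assemble a k z s 2 : ℚ)) / (a 2 : ℚ)⌉₊ + s 1 := by
  rw [assemble_of_two_le le_rfl]
  rfl

include ha hz0 in
lemma assemble_one :
    assemble a k z s 1 = a 1 * level a k z s 2 + ⌈((a 1 : ℚ) * (z 2 : ℚ)) / (a 2 : ℚ)⌉₊ + s 1 := by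
  rw [assemble_one_eq_ceil, assemble_of_two_le le_rfl]
  by_cases hk : 2 ≤ k
  · rw [ceil_mul_mul_add_div (ha 2 (by omega) hk)]
  · rw [level_eq_zero (by omega), hz0 2 (by omega)]
    simp

include hz in
lemma assemble_mod {i : ℕ} (h2 : 2 ≤ i) (hk : i ≤ k) : assemble a k z s i % a i = z i := by
  rw [assemble_of_two_le h2, Nat.mul_add_mod, Nat.mod_eq_of_lt (hz i ⟨h2, hk⟩)]

include hz hz0 in
lemma assemble_div {i : ℕ} (h2 : 2 ≤ i) : assemble a k z s i / a i = level a k z s i := by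
  rw [assemble_of_two_le h2]
  by_cases hk : i ≤ k
  · rw [Nat.mul_add_div ((Nat.zero_le _).trans_lt (hz i ⟨h2, hk⟩)),
      Nat.div_eq_of_lt (hz i ⟨h2, hk⟩), add_zero]
  · rw [level_eq_zero (by omega), hz0 i (by omega)]
    simp

include hz0 in
lemma assemble_eq_zero (hs0 : ∀ i, ¬(1 ≤ i ∧ i ≤ k) → s i = 0) {j : ℕ} (hj : j = 0 ∨ k < j) :
    assemble a k z s j = 0 := by
  have htail : ∀ i, 2 ≤ i → k < i → assemble a k z s i = 0 := fun i h2 hi => by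
    rw [assemble_of_two_le h2, level_eq_zero hi, hz0 i (by omega), mul_zero]
  rcases hj with rfl | hj
  · rfl
  by_cases hj1 : j = 1
  · subst hj1
    rw [assemble_one_eq_ceil, htail 2 le_rfl (by omega), hs0 1 (by omega)]
    simp
  · exact htail j (by omega) hj

include ha hz in
lemma assemble_mul_le {i : ℕ} (h1 : 1 ≤ i) (hk : i ≤ k - 1) :
    a i * assemble a k z s (i + 1) ≤ assemble a k z s i * a (i + 1) := by
  obtain rfl | h2 := h1.eq_or_lt
  · rw [mul_le_mul_iff_ceil_div_le (ha 2 (by omega) (by omega)), assemble_one_eq_ceil]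
    exact Nat.le_add_right _ _
  · rw [assemble_of_two_le h2, assemble_of_two_le (by omega),
      mul_add_mul_le_iff_ceil_add_le (hz i ⟨h2, by omega⟩) (ha (i + 1) (by omega) (by omega)),
      level_eq_add (i := i) (by omega)]
    exact Nat.add_le_add_right (Nat.le_add_left _ _) _

include hz hz0 in
lemma rem_assemble : rem a k (assemble a k z s) = z := by
  funext i
  by_cases hi : 2 ≤ i ∧ i ≤ k
  · rw [rem, if_pos hi, assemble_mod hz hi.1 hi.2]
  · rw [rem, if_neg hi, hz0 i hi]

include hz hz0 in
lemma slack_assemble (hs0 : ∀ i, ¬(1 ≤ i ∧ i ≤ k) → s i = 0) :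
    slack a k (assemble a k z s) = s := by
  funext i
  rw [slack, rem_assemble hz hz0]
  split_ifs with h1 h2
  · subst h1
    rw [assemble_one_eq_ceil, Nat.add_sub_cancel_left]
  · rw [assemble_div hz hz0 h2.1, assemble_div hz hz0 (by omega), level_eq_add (s := s) h2.2]
    omega
  · exact (hs0 i (by omega)).symm

include hz hz0 in
lemma sum_bseq_mul_gap :
    ∑ j ∈ Icc 2 k, bseq a j * (gap a z j : ℤ) =
      ∑ j ∈ Icc 2 (k - 1),
        bseq a j * ⌈(z (j + 1) : ℚ) / (a (j + 1) : ℚ) - (z j : ℚ) / (a j : ℚ)⌉ := by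
  rw [← sum_subset (Icc_subset_Icc_right (Nat.sub_le k 1)) fun j hj hj' => ?_]
  · refine sum_congr rfl fun j hj => ?_
    have hj := mem_Icc.mp hj
    rw [natCast_gap (hz j ⟨hj.1, by omega⟩)]
  · obtain rfl : j = k := by simp only [mem_Icc] at hj hj'; omega
    rw [gap_eq_zero (hz0 _ (by omega)), Nat.cast_zero, mul_zero]

include ha hz hz0 in
lemma natCast_sum_assemble :
    ((∑ i ∈ Icc 1 k, assemble a k z s i : ℕ) : ℤ) = weight a k z s := by
  rcases Nat.eq_zero_or_pos k with rfl | hk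
  · simp [weight, hz0 2 (by omega)]
  have hassemble : ∑ i ∈ Icc 2 k, (assemble a k z s i : ℤ) =
      ∑ i ∈ Icc 2 k, (a i : ℤ) * level a k z s i + ∑ i ∈ Icc 2 k, (z i : ℤ) := by
    rw [← sum_add_distrib]
    refine sum_congr rfl fun i hi => ?_
    rw [assemble_of_two_le (mem_Icc.mp hi).1]
    push_cast
    ring
  have hlevel : ∀ i, (level a k z s i : ℤ) = ∑ j ∈ Icc i k, ((s j : ℤ) + gap a z j) := by
    intro i
    push_cast [level]
    rfl
  have hslack : ∑ i ∈ Icc 1 k, bseq a i * (s i : ℤ) =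
      s 1 + ∑ i ∈ Icc 2 k, bseq a i * (s i : ℤ) := by
    rw [sum_Icc_eq_add_sum_Icc_succ _ hk, bseq, if_pos rfl, one_mul]
  have habel := sum_mul_sum_Icc_eq_sum_bseq_mul a k fun j => (s j : ℤ) + gap a z j
  have hsplit : ∑ j ∈ Icc 2 k, bseq a j * ((s j : ℤ) + gap a z j) =
      ∑ j ∈ Icc 2 k, bseq a j * (s j : ℤ) + ∑ j ∈ Icc 2 k, bseq a j * (gap a z j : ℤ) := by
    simp only [mul_add, sum_add_distrib]
  rw [Nat.cast_sum, sum_Icc_eq_add_sum_Icc_succ _ hk, assemble_one ha hz0, hassemble, weight,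
    hslack, ← sum_bseq_mul_gap hz hz0, ← Int.natCast_ceil_eq_ceil (by positivity)]
  push_cast
  simp only [hlevel]
  linarith

end Assemble

section Decompose

variable {l : ℕ → ℕ} (ha : ∀ i, 1 ≤ i → i ≤ k → 0 < a i)
  (hsupp : ∀ j, j = 0 ∨ k < j → l j = 0)
  (hineq : ∀ i, 1 ≤ i → i ≤ k - 1 → a i * l (i + 1) ≤ l i * a (i + 1))

include ha in
lemma rem_lt {i : ℕ} (hi : 2 ≤ i ∧ i ≤ k) : rem a k l i < a i := by
  rw [rem, if_pos hi]
  exact Nat.mod_lt _ (ha i (by omega) hi.2)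

include hsupp in
lemma slack_eq_zero {i : ℕ} (hi : ¬(1 ≤ i ∧ i ≤ k)) : slack a k l i = 0 := by
  rw [slack]
  split_ifs with h1 h2
  · subst h1
    rw [hsupp 1 (by omega), Nat.zero_sub]
  · omega
  · rfl

include ha hsupp hineq in
lemma gap_rem_add_div_le {i : ℕ} (h2 : 2 ≤ i) (hk : i ≤ k) :
    gap a (rem a k l) i + l (i + 1) / a (i + 1) ≤ l i / a i := by
  by_cases hik : i = k
  · subst hik
    rw [gap_eq_zero (by rw [rem, if_neg (by omega)]), hsupp (i + 1) (by omega), Nat.zero_div]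
    exact Nat.zero_le _
  have h := hineq i (by omega) (by omega)
  rw [← Nat.div_add_mod (l i) (a i), ← Nat.div_add_mod (l (i + 1)) (a (i + 1)),
    mul_add_mul_le_iff_ceil_add_le (Nat.mod_lt _ (ha i (by omega) hk))
      (ha (i + 1) (by omega) (by omega))] at h
  rwa [gap, rem, rem, if_pos ⟨by omega, by omega⟩, if_pos ⟨h2, hk⟩]

include ha hsupp hineq in
lemma level_rem_slack {i : ℕ} (h2 : 2 ≤ i) :
    level a k (rem a k l) (slack a k l) i = l i / a i := by
  have htail : ∀ i, k < i → level a k (rem a k l) (slack a k l) i = l i / a i := fun i hi => by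
    rw [level_eq_zero hi, hsupp i (Or.inr hi), Nat.zero_div]
  suffices ∀ d i, 2 ≤ i → k < i + d → level a k (rem a k l) (slack a k l) i = l i / a i from
    this k i h2 (by omega)
  intro d
  induction d with
  | zero => exact fun i _ hi => htail i hi
  | succ d ih =>
    intro i h2 hi
    obtain hki | hik := lt_or_ge k i
    · exact htail i hki
    have hle := gap_rem_add_div_le ha hsupp hineq h2 hik
    rw [level_eq_add hik, ih (i + 1) (by omega) (by omega), slack, if_neg (by omega),
      if_pos ⟨h2, hik⟩]
    omega

include ha hsupp hineq in
lemma assemble_rem_slack : assemble a k (rem a k l) (slack a k l) = l := by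
  have htail : ∀ i, 2 ≤ i → assemble a k (rem a k l) (slack a k l) i = l i := fun i h2 => by
    rw [assemble_of_two_le h2, level_rem_slack ha hsupp hineq h2, rem]
    split_ifs with hi
    · exact Nat.div_add_mod _ _
    · rw [hsupp i (by omega), Nat.zero_div, mul_zero]
  funext i
  rcases Nat.lt_or_ge i 2 with hi | hi
  · interval_cases i
    · exact (hsupp 0 (Or.inl rfl)).symm
    · rw [assemble_one_eq_ceil, htail 2 le_rfl, slack, if_pos rfl]
      have hceil : ⌈((a 1 : ℚ) * (l 2 : ℚ)) / (a 2 : ℚ)⌉₊ ≤ l 1 := by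
        by_cases hk : 2 ≤ k
        · exact (mul_le_mul_iff_ceil_div_le (ha 2 (by omega) hk)).mp (hineq 1 le_rfl (by omega))
        · simp [hsupp 2 (by omega)]
      omega
  · exact htail i hi

end Decompose

end RatioSeq

open RatioSeq

theorem stmt_15_general (k n : ℕ) (a : ℕ → ℕ)
    (ha : ∀ i, 1 ≤ i → i ≤ k → 0 < a i) :
    {lam : ℕ → ℕ | (∀ j, j = 0 ∨ k < j → lam j = 0) ∧
      (∀ i, 1 ≤ i → i ≤ k - 1 → a i * lam (i + 1) ≤ lam i * a (i + 1)) ∧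
      ∑ i ∈ Finset.Icc 1 k, lam i = n}.ncard =
    {zs : (ℕ → ℕ) × (ℕ → ℕ) |
      (∀ i, (2 ≤ i ∧ i ≤ k) → zs.1 i < a i) ∧
      (∀ i, ¬(2 ≤ i ∧ i ≤ k) → zs.1 i = 0) ∧
      (∀ i, ¬(1 ≤ i ∧ i ≤ k) → zs.2 i = 0) ∧
      (⌈((a 1 : ℚ) * (zs.1 2 : ℚ)) / (a 2 : ℚ)⌉ +
        (∑ i ∈ Finset.Icc 2 k, (zs.1 i : ℤ)) +
        (∑ i ∈ Finset.Icc 2 (k - 1),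
          bseq a i * ⌈(zs.1 (i + 1) : ℚ) / (a (i + 1) : ℚ) - (zs.1 i : ℚ) / (a i : ℚ)⌉) +
        (∑ i ∈ Finset.Icc 1 k, bseq a i * (zs.2 i : ℤ)) = (n : ℤ))}.ncard := by
  refine Set.BijOn.ncard_eq (f := fun l => (rem a k l, slack a k l))
    (Set.InvOn.bijOn (f' := fun p => assemble a k p.1 p.2) ⟨?_, ?_⟩ ?_ ?_)
  · rintro l ⟨hsupp, hineq, -⟩
    exact assemble_rem_slack ha hsupp hineq
  · rintro ⟨z, s⟩ ⟨hz, hz0, hs0, -⟩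
    exact Prod.ext (rem_assemble hz hz0) (slack_assemble hz hz0 hs0)
  · rintro l ⟨hsupp, hineq, hsum⟩
    refine ⟨fun i hi => rem_lt ha hi, fun i hi => if_neg hi, fun i hi => slack_eq_zero hsupp hi, ?_⟩
    change weight a k _ _ = n
    rw [← natCast_sum_assemble ha (fun i hi => rem_lt ha hi) (fun i hi => if_neg hi),
      assemble_rem_slack ha hsupp hineq, hsum]
  · rintro ⟨z, s⟩ ⟨hz, hz0, hs0, hw⟩
    refine ⟨fun j hj => assemble_eq_zero hz0 hs0 hj, fun i h1 hk => assemble_mul_le ha hz h1 hk, ?_⟩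
    exact_mod_cast (natCast_sum_assemble ha hz hz0).trans hw

/-- Theorem 2: the weight-`n` coefficient of the generating function of
nonnegative sequences with `λᵢ/aᵢ ≥ λ_{i+1}/a_{i+1}` equals the number of pairs `(z, s)`
with `0 ≤ zᵢ < aᵢ` (`2 ≤ i ≤ k`), `s ∈ ℕ^k`, and
`⌈a₁z₂/a₂⌉ + ∑ zᵢ + ∑_{i=2}^{k-1} bᵢ⌈z_{i+1}/a_{i+1} - zᵢ/aᵢ⌉ + ∑ bᵢsᵢ = n`. -/
theorem stmt_15 (k n : ℕ) (hk : 0 < k) (a : ℕ → ℕ)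
    (ha : ∀ i, 1 ≤ i → i ≤ k → 0 < a i) :
    {lam : ℕ → ℕ | (∀ j, j = 0 ∨ k < j → lam j = 0) ∧
      (∀ i, 1 ≤ i → i ≤ k - 1 → a i * lam (i + 1) ≤ lam i * a (i + 1)) ∧
      ∑ i ∈ Finset.Icc 1 k, lam i = n}.ncard =
    {zs : (ℕ → ℕ) × (ℕ → ℕ) |
      (∀ i, (2 ≤ i ∧ i ≤ k) → zs.1 i < a i) ∧
      (∀ i, ¬(2 ≤ i ∧ i ≤ k) → zs.1 i = 0) ∧
      (∀ i, ¬(1 ≤ i ∧ i ≤ k) → zs.2 i = 0) ∧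
      (⌈((a 1 : ℚ) * (zs.1 2 : ℚ)) / (a 2 : ℚ)⌉ +
        (∑ i ∈ Finset.Icc 2 k, (zs.1 i : ℤ)) +
        (∑ i ∈ Finset.Icc 2 (k - 1),
          bseq a i * ⌈(zs.1 (i + 1) : ℚ) / (a (i + 1) : ℚ) - (zs.1 i : ℚ) / (a i : ℚ)⌉) +
        (∑ i ∈ Finset.Icc 1 k, bseq a i * (zs.2 i : ℤ)) = (n : ℤ))}.ncard :=
  stmt_15_general k n a ha
end

section
/- There is a bijection between the set of nonnegative integer sequences (λ_1,...,λ_5) of weight n satisfying λ_1/1 ≥ λ_2/3, λ_2/3 ≥ λ_3/2, λ_3/2 ≥ λ_4/3, λ_4/3 ≥ λ_5/1 ≥ 0, and the set of partitions of n into parts of size at most 5. -/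
def pp1 : ℕ → ℕ → ℕ → ℕ
  | 0, 0, 0 => 0
  | 0, 0, 1 => 1
  | 0, 1, 0 => 1
  | 0, 1, 1 => 1
  | 0, 2, 0 => 1
  | 0, 2, 1 => 2
  | 1, 0, 0 => 1
  | 1, 0, 1 => 1
  | 1, 1, 0 => 1
  | 1, 1, 1 => 2
  | 1, 2, 0 => 2
  | 1, 2, 1 => 2
  | 2, 0, 0 => 1
  | 2, 0, 1 => 2
  | 2, 1, 0 => 2
  | 2, 1, 1 => 2
  | 2, 2, 0 => 2
  | 2, 2, 1 => 3
  | _, _, _ => 0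

def pp2 : ℕ → ℕ → ℕ → ℕ
  | 0, 0, 0 => 0
  | 0, 0, 1 => 3
  | 0, 1, 0 => 2
  | 0, 1, 1 => 3
  | 0, 2, 0 => 3
  | 0, 2, 1 => 5
  | 1, 0, 0 => 1
  | 1, 0, 1 => 3
  | 1, 1, 0 => 2
  | 1, 1, 1 => 5
  | 1, 2, 0 => 4
  | 1, 2, 1 => 6
  | 2, 0, 0 => 2
  | 2, 0, 1 => 4
  | 2, 1, 0 => 4
  | 2, 1, 1 => 5
  | 2, 2, 0 => 4
  | 2, 2, 1 => 7
  | _, _, _ => 0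

def pp3 : ℕ → ℕ → ℕ → ℕ
  | 0, 0, 0 => 0
  | 0, 0, 1 => 1
  | 0, 1, 0 => 0
  | 0, 1, 1 => 2
  | 0, 2, 0 => 1
  | 0, 2, 1 => 2
  | 1, 0, 0 => 0
  | 1, 0, 1 => 2
  | 1, 1, 0 => 1
  | 1, 1, 1 => 2
  | 1, 2, 0 => 1
  | 1, 2, 1 => 3
  | 2, 0, 0 => 1
  | 2, 0, 1 => 2
  | 2, 1, 0 => 1
  | 2, 1, 1 => 3
  | 2, 2, 0 => 2
  | 2, 2, 1 => 3
  | _, _, _ => 0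

def pp4 : ℕ → ℕ → ℕ → ℕ
  | 0, 0, 0 => 0
  | 0, 0, 1 => 0
  | 0, 1, 0 => 0
  | 0, 1, 1 => 2
  | 0, 2, 0 => 1
  | 0, 2, 1 => 2
  | 1, 0, 0 => 0
  | 1, 0, 1 => 1
  | 1, 1, 0 => 1
  | 1, 1, 1 => 1
  | 1, 2, 0 => 1
  | 1, 2, 1 => 2
  | 2, 0, 0 => 0
  | 2, 0, 1 => 1
  | 2, 1, 0 => 0
  | 2, 1, 1 => 2
  | 2, 2, 0 => 2
  | 2, 2, 1 => 2
  | _, _, _ => 0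

def ga : ℕ → ℕ → ℕ → ℕ
  | 0, 0, 0 => 0
  | 0, 0, 1 => 0
  | 0, 1, 0 => 1
  | 0, 1, 1 => 0
  | 0, 2, 0 => 0
  | 0, 2, 1 => 1
  | 1, 0, 0 => 1
  | 1, 0, 1 => 2
  | 1, 1, 0 => 2
  | 1, 1, 1 => 1
  | 1, 2, 0 => 2
  | 1, 2, 1 => 2
  | 2, 0, 0 => 0
  | 2, 0, 1 => 2
  | 2, 1, 0 => 1
  | 2, 1, 1 => 1
  | 2, 2, 0 => 0
  | 2, 2, 1 => 2
  | _, _, _ => 0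

def gb : ℕ → ℕ → ℕ → ℕ
  | 0, 0, 0 => 0
  | 0, 0, 1 => 0
  | 0, 1, 0 => 0
  | 0, 1, 1 => 2
  | 0, 2, 0 => 1
  | 0, 2, 1 => 2
  | 1, 0, 0 => 0
  | 1, 0, 1 => 1
  | 1, 1, 0 => 0
  | 1, 1, 1 => 2
  | 1, 2, 0 => 2
  | 1, 2, 1 => 2
  | 2, 0, 0 => 1
  | 2, 0, 1 => 0
  | 2, 1, 0 => 1
  | 2, 1, 1 => 1
  | 2, 2, 0 => 2
  | 2, 2, 1 => 1
  | _, _, _ => 0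

def gc : ℕ → ℕ → ℕ → ℕ
  | 0, 0, 0 => 0
  | 0, 0, 1 => 1
  | 0, 1, 0 => 1
  | 0, 1, 1 => 0
  | 0, 2, 0 => 1
  | 0, 2, 1 => 1
  | 1, 0, 0 => 0
  | 1, 0, 1 => 0
  | 1, 1, 0 => 1
  | 1, 1, 1 => 0
  | 1, 2, 0 => 0
  | 1, 2, 1 => 1
  | 2, 0, 0 => 0
  | 2, 0, 1 => 0
  | 2, 1, 0 => 1
  | 2, 1, 1 => 0
  | 2, 2, 0 => 1
  | 2, 2, 1 => 1
  | _, _, _ => 0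

def fB (v : Fin 5 → ℕ) : Fin 5 → ℕ :=
  ![(3 * v 0 - v 1) / 3, 3 * ((3 * v 2 - 2 * v 3) / 6) + ga (v 1 % 3) (v 3 % 3) (v 2 % 2), 3 * (v 3 / 3 - v 4) + gb (v 1 % 3) (v 3 % 3) (v 2 % 2), (2 * v 1 - 3 * v 2) / 6, 2 * v 4 + gc (v 1 % 3) (v 3 % 3) (v 2 % 2)]

def fA (v : Fin 5 → ℕ) : Fin 5 → ℕ :=
  ![pp1 (v 1 % 3) (v 2 % 3) (v 4 % 2) + (v 0 + v 3 + v 1 / 3 + v 2 / 3 + v 4 / 2), pp2 (v 1 % 3) (v 2 % 3) (v 4 % 2) + 3 * (v 3 + v 1 / 3 + v 2 / 3 + v 4 / 2), pp3 (v 1 % 3) (v 2 % 3) (v 4 % 2) + 2 * (v 1 / 3 + v 2 / 3 + v 4 / 2), pp4 (v 1 % 3) (v 2 % 3) (v 4 % 2) + 3 * (v 2 / 3 + v 4 / 2), v 4 / 2]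

set_option maxHeartbeats 1000000 in
lemma lemB (v : Fin 5 → ℕ) (k1 : v 1 ≤ 3 * v 0) (k2 : 3 * v 2 ≤ 2 * v 1) (k3 : 2 * v 3 ≤ 3 * v 2) (k4 : 3 * v 4 ≤ v 3) :
    fB v 0 + 2 * fB v 1 + 3 * fB v 2 + 4 * fB v 3 + 5 * fB v 4 = v 0 + v 1 + v 2 + v 3 + v 4 := by
  simp only [fA, fB, Matrix.cons_val_zero, Matrix.cons_val_one, Matrix.head_cons, Matrix.cons_val_two, Matrix.tail_cons, Matrix.cons_val_three, Matrix.cons_val_four, Fin.mk_zero, Fin.mk_one, (show ((⟨2, by norm_num⟩ : Fin 5)) = 2 from rfl), (show ((⟨3, by norm_num⟩ : Fin 5)) = 3 from rfl), (show ((⟨4, by norm_num⟩ : Fin 5)) = 4 from rfl)]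
  have h1 : v 1 % 3 = 0 ∨ v 1 % 3 = 1 ∨ v 1 % 3 = 2 := by omega
  have h2 : v 3 % 3 = 0 ∨ v 3 % 3 = 1 ∨ v 3 % 3 = 2 := by omega
  have h3 : v 2 % 2 = 0 ∨ v 2 % 2 = 1 := by omega
  rcases h1 with h1|h1|h1 <;> rcases h2 with h2|h2|h2 <;> rcases h3 with h3|h3 <;>
    rw [h1, h2, h3] <;> simp only [pp1, pp2, pp3, pp4, ga, gb, gc, Nat.add_mul_mod_self_left, Nat.mul_mod_right, Nat.mul_add_mod, Nat.reduceMod, Nat.zero_add, Nat.add_zero, Nat.mul_zero, Nat.zero_mul] <;> omega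

set_option maxHeartbeats 1000000 in
lemma lemA (v : Fin 5 → ℕ) :
    fA v 1 ≤ 3 * fA v 0 ∧ 3 * fA v 2 ≤ 2 * fA v 1 ∧ 2 * fA v 3 ≤ 3 * fA v 2 ∧
    3 * fA v 4 ≤ fA v 3 ∧
    fA v 0 + fA v 1 + fA v 2 + fA v 3 + fA v 4 = v 0 + 2 * v 1 + 3 * v 2 + 4 * v 3 + 5 * v 4 := by
  simp only [fA, fB, Matrix.cons_val_zero, Matrix.cons_val_one, Matrix.head_cons, Matrix.cons_val_two, Matrix.tail_cons, Matrix.cons_val_three, Matrix.cons_val_four, Fin.mk_zero, Fin.mk_one, (show ((⟨2, by norm_num⟩ : Fin 5)) = 2 from rfl), (show ((⟨3, by norm_num⟩ : Fin 5)) = 3 from rfl), (show ((⟨4, by norm_num⟩ : Fin 5)) = 4 from rfl)]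
  have h1 : v 1 % 3 = 0 ∨ v 1 % 3 = 1 ∨ v 1 % 3 = 2 := by omega
  have h2 : v 2 % 3 = 0 ∨ v 2 % 3 = 1 ∨ v 2 % 3 = 2 := by omega
  have h3 : v 4 % 2 = 0 ∨ v 4 % 2 = 1 := by omega
  rcases h1 with h1|h1|h1 <;> rcases h2 with h2|h2|h2 <;> rcases h3 with h3|h3 <;>
    rw [h1, h2, h3] <;> simp only [pp1, pp2, pp3, pp4, ga, gb, gc, Nat.add_mul_mod_self_left, Nat.mul_mod_right, Nat.mul_add_mod, Nat.reduceMod, Nat.zero_add, Nat.add_zero, Nat.mul_zero, Nat.zero_mul] <;> omega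

set_option maxHeartbeats 1000000 in
lemma lemAB (v : Fin 5 → ℕ) (k1 : v 1 ≤ 3 * v 0) (k2 : 3 * v 2 ≤ 2 * v 1) (k3 : 2 * v 3 ≤ 3 * v 2) (k4 : 3 * v 4 ≤ v 3) : fA (fB v) = v := by
  funext i
  fin_cases i <;> simp only [fA, fB, Matrix.cons_val_zero, Matrix.cons_val_one, Matrix.head_cons, Matrix.cons_val_two, Matrix.tail_cons, Matrix.cons_val_three, Matrix.cons_val_four, Fin.mk_zero, Fin.mk_one, (show ((⟨2, by norm_num⟩ : Fin 5)) = 2 from rfl), (show ((⟨3, by norm_num⟩ : Fin 5)) = 3 from rfl), (show ((⟨4, by norm_num⟩ : Fin 5)) = 4 from rfl)]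
  all_goals (
  have h1 : v 1 % 3 = 0 ∨ v 1 % 3 = 1 ∨ v 1 % 3 = 2 := by omega
  have h2 : v 3 % 3 = 0 ∨ v 3 % 3 = 1 ∨ v 3 % 3 = 2 := by omega
  have h3 : v 2 % 2 = 0 ∨ v 2 % 2 = 1 := by omega
  rcases h1 with h1|h1|h1 <;> rcases h2 with h2|h2|h2 <;> rcases h3 with h3|h3 <;>
    rw [h1, h2, h3] <;> simp only [pp1, pp2, pp3, pp4, ga, gb, gc, Nat.add_mul_mod_self_left, Nat.mul_mod_right, Nat.mul_add_mod, Nat.reduceMod, Nat.zero_add, Nat.add_zero, Nat.mul_zero, Nat.zero_mul] <;> omega)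

set_option maxHeartbeats 1000000 in
lemma lemBA (v : Fin 5 → ℕ) : fB (fA v) = v := by
  funext i
  fin_cases i <;> simp only [fA, fB, Matrix.cons_val_zero, Matrix.cons_val_one, Matrix.head_cons, Matrix.cons_val_two, Matrix.tail_cons, Matrix.cons_val_three, Matrix.cons_val_four, Fin.mk_zero, Fin.mk_one, (show ((⟨2, by norm_num⟩ : Fin 5)) = 2 from rfl), (show ((⟨3, by norm_num⟩ : Fin 5)) = 3 from rfl), (show ((⟨4, by norm_num⟩ : Fin 5)) = 4 from rfl)]
  all_goals (
  have h1 : v 1 % 3 = 0 ∨ v 1 % 3 = 1 ∨ v 1 % 3 = 2 := by omega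
  have h2 : v 2 % 3 = 0 ∨ v 2 % 3 = 1 ∨ v 2 % 3 = 2 := by omega
  have h3 : v 4 % 2 = 0 ∨ v 4 % 2 = 1 := by omega
  rcases h1 with h1|h1|h1 <;> rcases h2 with h2|h2|h2 <;> rcases h3 with h3|h3 <;>
    rw [h1, h2, h3] <;> simp only [pp1, pp2, pp3, pp4, ga, gb, gc, Nat.add_mul_mod_self_left, Nat.mul_mod_right, Nat.mul_add_mod, Nat.reduceMod, Nat.zero_add, Nat.add_zero, Nat.mul_zero, Nat.zero_mul] <;> omega)

set_option maxHeartbeats 1000000 in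
/-- Example 15: nonnegative integer sequences `(λ₁,…,λ₅)` of weight `n`
with `λ₁/1 ≥ λ₂/3 ≥ λ₃/2 ≥ λ₄/3 ≥ λ₅/1 ≥ 0` are in bijection with partitions of `n`
into parts of size at most `5`. -/
theorem stmt_16 (n : ℕ) :
    Nonempty (
      {lam : Fin 5 → ℕ |
        lam 1 ≤ 3 * lam 0 ∧ 3 * lam 2 ≤ 2 * lam 1 ∧ 2 * lam 3 ≤ 3 * lam 2 ∧
        3 * lam 4 ≤ lam 3 ∧ ∑ i, lam i = n} ≃
      {m : Fin 5 → ℕ | ∑ i : Fin 5, ((i : ℕ) + 1) * m i = n}) := by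
  refine ⟨⟨fun x => ⟨fB x.1, ?_⟩, fun y => ⟨fA y.1, ?_⟩, ?_, ?_⟩⟩
  · obtain ⟨k1, k2, k3, k4, k5⟩ := x.2
    simp only [Fin.sum_univ_five] at k5
    have H := lemB x.1 k1 k2 k3 k4
    simp only [Set.mem_setOf_eq, Fin.sum_univ_five, (show ((0:Fin 5):ℕ)=0 from rfl), (show ((1:Fin 5):ℕ)=1 from rfl), (show ((2:Fin 5):ℕ)=2 from rfl), (show ((3:Fin 5):ℕ)=3 from rfl), (show ((4:Fin 5):ℕ)=4 from rfl)]
    omega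
  · have k5 := y.2
    simp only [Set.mem_setOf_eq, Fin.sum_univ_five, (show ((0:Fin 5):ℕ)=0 from rfl), (show ((1:Fin 5):ℕ)=1 from rfl), (show ((2:Fin 5):ℕ)=2 from rfl), (show ((3:Fin 5):ℕ)=3 from rfl), (show ((4:Fin 5):ℕ)=4 from rfl)] at k5
    have H := lemA y.1
    simp only [Set.mem_setOf_eq, Fin.sum_univ_five]
    omega
  · intro x
    obtain ⟨k1, k2, k3, k4, k5⟩ := x.2
    exact Subtype.ext (lemAB x.1 k1 k2 k3 k4)
  · intro y
    exact Subtype.ext (lemBA y.1)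
end

section
/- Partitions (λ_1,...,λ_k) of n satisfying λ_i ≥ λ_{i+1} + λ_{i+2} + λ_{i+3} + ... (i.e. λ_i ≥ Σ_{j>i} λ_j) for all 1 ≤ i ≤ k are in bijection with partitions of n into parts from {1, 2, 4, ..., 2^{k-1}} (powers of 2 up to 2^{k-1}). Moreover the two-variable refinement holds: the generating function tracking odd-indexed weight by x and even-indexed weight by y is Π_{i=1}^k (1 - x^{o_i} y^{e_i})^{-1} where o_1 = o_2 = 1, o_i = o_{i-1} + 2o_{i-2} for i > 2, e_1 = 0, e_2 = 1, and e_i = o_{i-1} for i > 2. -/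
/-- `o₁ = o₂ = 1`, `oᵢ = o_{i-1} + 2 o_{i-2}` (zero-indexed). -/
def oseq : ℕ → ℕ
  | 0 => 1
  | 1 => 1
  | n + 2 => oseq (n + 1) + 2 * oseq n

/-- `e₁ = 0`, `e₂ = 1`, `eᵢ = o_{i-1}` (zero-indexed). -/
def eseq : ℕ → ℕ
  | 0 => 0
  | 1 => 1
  | n + 2 => oseq (n + 1)

/-!
Record a superincreasing sequence `λ` by its slacks `aᵢ = λᵢ - (λᵢ₊₁ + λᵢ₊₂ + ⋯)`. Since the
tail sums `Sᵢ = λᵢ + λᵢ₊₁ + ⋯` satisfy `Sᵢ = aᵢ + 2 Sᵢ₊₁`, the slacks are arbitrary and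
`λᵢ = aᵢ + ∑_{j > i} 2^{j-i-1} aⱼ`. Hence any weighted sum `∑ wⱼ λⱼ` equals `∑ cᵢ aᵢ` with
`cᵢ = wᵢ + ∑_{j < i} 2^{i-j-1} wⱼ`, i.e. `cᵢ₊₁ + wᵢ = 2 cᵢ + wᵢ₊₁`. For `w ≡ 1` this gives
`cᵢ = 2^i`, and for the indicators of even and odd indices it gives `oᵢ` and `eᵢ`.
-/

open Finset

namespace Superincreasing

variable {k i : ℕ} {a lam : ℕ → ℕ}

def IsSuperincreasing (k : ℕ) (lam : ℕ → ℕ) : Prop :=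
  (∀ j, k ≤ j → lam j = 0) ∧ ∀ i < k, ∑ j ∈ Ico (i + 1) k, lam j ≤ lam i

def slack (k : ℕ) (lam : ℕ → ℕ) (i : ℕ) : ℕ := lam i - ∑ j ∈ Ico (i + 1) k, lam j

def weightedTail (k : ℕ) (a : ℕ → ℕ) (i : ℕ) : ℕ := ∑ j ∈ Ico i k, 2 ^ (j - i) * a j

def ofSlack (k : ℕ) (a : ℕ → ℕ) (i : ℕ) : ℕ :=
  if i < k then a i + weightedTail k a (i + 1) else 0

theorem weightedTail_of_lt (h : i < k) :
    weightedTail k a i = a i + 2 * weightedTail k a (i + 1) := by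
  rw [weightedTail, sum_eq_sum_Ico_succ_bot h, weightedTail, mul_sum, Nat.sub_self, pow_zero,
    one_mul]
  congr 1
  refine sum_congr rfl fun j hj => ?_
  rw [show j - i = j - (i + 1) + 1 by grind, pow_succ]
  ring

theorem sum_Ico_ofSlack (h : i ≤ k) : ∑ j ∈ Ico i k, ofSlack k a j = weightedTail k a i := by
  induction h using Nat.decreasingInduction with
  | self => simp [weightedTail]
  | of_succ i hi ih =>
    rw [sum_eq_sum_Ico_succ_bot hi, ih, weightedTail_of_lt hi, ofSlack, if_pos hi]
    ring

theorem ofSlack_isSuperincreasing (k : ℕ) (a : ℕ → ℕ) : IsSuperincreasing k (ofSlack k a) := by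
  refine ⟨fun j hj => if_neg (by omega), fun i hi => ?_⟩
  rw [sum_Ico_ofSlack hi, ofSlack, if_pos hi]
  exact Nat.le_add_left _ _

theorem slack_ofSlack (h : i < k) : slack k (ofSlack k a) i = a i := by
  rw [slack, sum_Ico_ofSlack h, ofSlack, if_pos h, Nat.add_sub_cancel]

theorem weightedTail_slack (hlam : IsSuperincreasing k lam) (h : i ≤ k) :
    weightedTail k (slack k lam) i = ∑ j ∈ Ico i k, lam j := by
  induction h using Nat.decreasingInduction with
  | self => simp [weightedTail]
  | of_succ i hi ih =>
    have := hlam.2 i hi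
    rw [weightedTail_of_lt hi, ih, sum_eq_sum_Ico_succ_bot hi, slack]
    omega

theorem ofSlack_slack (hlam : IsSuperincreasing k lam) : ofSlack k (slack k lam) = lam := by
  funext i
  by_cases hi : i < k
  · have := hlam.2 i hi
    rw [ofSlack, if_pos hi, weightedTail_slack (i := i + 1) hlam hi, slack]
    omega
  · rw [ofSlack, if_neg hi, hlam.1 i (not_lt.1 hi)]

theorem ofSlack_congr {b : ℕ → ℕ} (h : ∀ i < k, a i = b i) : ofSlack k a = ofSlack k b := by
  funext i
  unfold ofSlack weightedTail
  split_ifs with hi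
  · rw [h i hi, sum_congr rfl fun j hj => by rw [h j (mem_Ico.1 hj).2]]
  · rfl

noncomputable def slackEquiv (k : ℕ) : {lam // IsSuperincreasing k lam} ≃ (Fin k → ℕ) where
  toFun lam i := slack k lam i
  invFun a := ⟨ofSlack k (Function.extend Fin.val a 0), ofSlack_isSuperincreasing _ _⟩
  left_inv lam := Subtype.ext <|
    (ofSlack_congr fun i hi => Fin.val_injective.extend_apply _ _ ⟨i, hi⟩).trans
      (ofSlack_slack lam.2)
  right_inv _ := funext fun i => (slack_ofSlack i.2).trans (Fin.val_injective.extend_apply _ _ i)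

noncomputable def subtypeEquivOfSlack {r : (ℕ → ℕ) → Prop} {q : (Fin k → ℕ) → Prop}
    (h : ∀ lam : {lam // IsSuperincreasing k lam}, r lam ↔ q (slackEquiv k lam)) :
    {lam : ℕ → ℕ // (∀ j, k ≤ j → lam j = 0) ∧
      (∀ i < k, ∑ j ∈ Ico (i + 1) k, lam j ≤ lam i) ∧ r lam} ≃ {a // q a} :=
  (Equiv.subtypeEquivRight fun _ => and_assoc.symm).trans <|
    (Equiv.subtypeSubtypeEquivSubtypeInter _ _).symm.trans ((slackEquiv k).subtypeEquiv h)

def slackWeight (w : ℕ → ℕ) (i : ℕ) : ℕ := w i + ∑ j ∈ range i, 2 ^ (i - (j + 1)) * w j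

theorem sum_mul_ofSlack (w a : ℕ → ℕ) :
    ∑ j ∈ range k, w j * ofSlack k a j = ∑ i ∈ range k, slackWeight w i * a i := by
  have expand : ∀ j ∈ range k, w j * ofSlack k a j =
      w j * a j + ∑ i ∈ Ico (j + 1) k, 2 ^ (i - (j + 1)) * w j * a i := by
    intro j hj
    rw [ofSlack, if_pos (mem_range.1 hj), weightedTail, mul_add, mul_sum]
    simp only [mul_left_comm, mul_assoc]
  rw [sum_congr rfl expand, sum_add_distrib,
    sum_comm' (t' := range k) (s' := range) (by intros; simp only [mem_range, mem_Ico]; omega),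
    ← sum_add_distrib]
  simp only [slackWeight, add_mul, sum_mul]

theorem sum_mul_eq_sum_slackWeight_mul (w : ℕ → ℕ) (lam : {lam // IsSuperincreasing k lam}) :
    ∑ j ∈ range k, w j * lam.1 j = ∑ i : Fin k, slackWeight w i * slackEquiv k lam i := by
  rw [← ofSlack_slack lam.2, sum_mul_ofSlack, ← Fin.sum_univ_eq_sum_range]
  rfl

theorem slackWeight_succ (w : ℕ → ℕ) (i : ℕ) :
    slackWeight w (i + 1) + w i = 2 * slackWeight w i + w (i + 1) := by
  have : ∀ j ∈ range i, 2 ^ (i + 1 - (j + 1)) * w j = 2 * (2 ^ (i - (j + 1)) * w j) := by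
    intro j hj
    rw [← mul_assoc, ← pow_succ', show i - (j + 1) + 1 = i + 1 - (j + 1) by grind]
  rw [slackWeight, slackWeight, sum_range_succ, sum_congr rfl this, ← mul_sum, Nat.sub_self,
    pow_zero, one_mul]
  ring

theorem slackWeight_eq_of_succ {w c : ℕ → ℕ} (h0 : c 0 = w 0)
    (hs : ∀ i, c (i + 1) + w i = 2 * c i + w (i + 1)) : slackWeight w = c := by
  funext i
  induction i with
  | zero => simp [slackWeight, h0]
  | succ i ih => have := slackWeight_succ w i; have := hs i; omega

theorem slackWeight_one : slackWeight (fun _ => 1) = (2 ^ ·) :=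
  slackWeight_eq_of_succ rfl fun i => by rw [pow_succ]; ring

def parityWeight (r j : ℕ) : ℕ := if j % 2 = r then 1 else 0

theorem sum_filter_mod_two_eq (r : ℕ) (lam : ℕ → ℕ) :
    ∑ j ∈ (range k).filter (fun j => j % 2 = r), lam j
      = ∑ j ∈ range k, parityWeight r j * lam j := by
  simp only [sum_filter, parityWeight, boole_mul]

theorem oseq_succ_add_parityWeight (i : ℕ) :
    oseq (i + 1) + parityWeight 0 i = 2 * oseq i + parityWeight 0 (i + 1) := by
  induction i with
  | zero => rfl
  | succ i ih =>
    have : oseq (i + 1 + 1) = oseq (i + 1) + 2 * oseq i := rfl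
    unfold parityWeight at *
    split_ifs at * <;> omega

theorem slackWeight_parityWeight_zero : slackWeight (parityWeight 0) = oseq :=
  slackWeight_eq_of_succ rfl oseq_succ_add_parityWeight

theorem slackWeight_parityWeight_one : slackWeight (parityWeight 1) = eseq := by
  refine slackWeight_eq_of_succ rfl fun i => ?_
  match i with
  | 0 | 1 => rfl
  | i + 2 =>
    have := oseq_succ_add_parityWeight (i + 1)
    show oseq (i + 2) + _ = 2 * oseq (i + 1) + _
    unfold parityWeight at *
    split_ifs at * <;> omega

end Superincreasing

open Superincreasing in
/-- Example 21: partitions with `λᵢ ≥ λ_{i+1} + λ_{i+2} + ⋯` are in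
bijection with partitions into parts from `{1, 2, 4, …, 2^{k-1}}`; moreover the
two-variable (odd/even weighted) generating function is `∏ᵢ (1 - x^{oᵢ} y^{eᵢ})⁻¹`. -/
theorem stmt_18 (k : ℕ) :
    (∀ n : ℕ, Nonempty (
      {lam : ℕ → ℕ | (∀ j, k ≤ j → lam j = 0) ∧
        (∀ i < k, ∑ j ∈ Finset.Ico (i + 1) k, lam j ≤ lam i) ∧
        ∑ j ∈ Finset.range k, lam j = n} ≃
      {m : Fin k → ℕ | ∑ i : Fin k, 2 ^ (i : ℕ) * m i = n})) ∧
    (∀ l m : ℕ,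
      {lam : ℕ → ℕ | (∀ j, k ≤ j → lam j = 0) ∧
        (∀ i < k, ∑ j ∈ Finset.Ico (i + 1) k, lam j ≤ lam i) ∧
        (∑ j ∈ (Finset.range k).filter (fun j => j % 2 = 0), lam j) = l ∧
        (∑ j ∈ (Finset.range k).filter (fun j => j % 2 = 1), lam j) = m}.ncard =
      {s : Fin k → ℕ |
        (∑ i : Fin k, oseq (i : ℕ) * s i) = l ∧ (∑ i : Fin k, eseq (i : ℕ) * s i) = m}.ncard) := by
  refine ⟨fun n => ⟨subtypeEquivOfSlack fun lam => ?_⟩, fun l m => ?_⟩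
  · simpa [slackWeight_one] using
      congrArg (· = n) (sum_mul_eq_sum_slackWeight_mul (fun _ => 1) lam)
  · rw [← Nat.card_coe_set_eq, ← Nat.card_coe_set_eq]
    refine Nat.card_congr (subtypeEquivOfSlack fun lam => ?_)
    rw [sum_filter_mod_two_eq, sum_filter_mod_two_eq, sum_mul_eq_sum_slackWeight_mul,
      sum_mul_eq_sum_slackWeight_mul, slackWeight_parityWeight_zero, slackWeight_parityWeight_one]
    rfl
end
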